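/- arXiv:1903.00247 — 4 statements merged into one kernel-verified Lean document; each statement's English description precedes it below -/
import Mathlib

section
/- Fix d ≥ 1 and reals p_j > 0 (j = 1,…,d) with Σ_{j=1}^d p_j ≤ 1, and let a_k ∈ (0,1) for k = 1,…,d. Let P be the matrix on E = {0,1}^d with P(i, i+s_k) = a_k·p_k when i_k = 0, P(i, i−s_k) = (1−a_k)·p_k when i_k = 1, P(i,i) = 1 − Σ_{j: i_j=0} a_j p_j − Σ_{j: i_j=1} (1−a_j) p_j, other entries 0, and let π(i) := ∏_{j=1}^d (a_j if i_j = 1, else 1−a_j). Then for every integer n ≥ 0, sep(δ₀ Pⁿ, π) = 1 − (δ₀ (P*)ⁿ)((1,…,1)), where δ₀ is the point mass at (0,…,0) and P* is the coupon collector chain on {0,1}^d. -/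
open Matrix Finset
open scoped Classical

/-- The hypercube `{0,1}^d`. -/
abbrev Cube (d : ℕ) : Type := Fin d → Fin 2

/-- The coupon collector chain on `{0,1}^d` (case `N_1 = … = N_d = 1`). -/
noncomputable def cubeCoupon (d : ℕ) (p : Fin d → ℝ) : Matrix (Cube d) (Cube d) ℝ :=
  fun i i' =>
    (∑ k : Fin d, if (i k : ℕ) = 0 ∧ (i' k : ℕ) = 1 ∧ (∀ j, j ≠ k → i' j = i j)
        then p k else 0) +
    (if i' = i then 1 - ∑ j : Fin d, (if (i j : ℕ) = 0 then p j else 0) else 0)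

/-- The antidual chain of Theorem 4 on `{0,1}^d`. -/
noncomputable def cubeAntidual (d : ℕ) (p a : Fin d → ℝ) : Matrix (Cube d) (Cube d) ℝ :=
  fun i i' =>
    (∑ k : Fin d, if (i k : ℕ) = 0 ∧ (i' k : ℕ) = 1 ∧ (∀ j, j ≠ k → i' j = i j)
        then a k * p k else 0) +
    (∑ k : Fin d, if (i k : ℕ) = 1 ∧ (i' k : ℕ) = 0 ∧ (∀ j, j ≠ k → i' j = i j)
        then (1 - a k) * p k else 0) +
    (if i' = i
        then 1 - ∑ j : Fin d, (if (i j : ℕ) = 0 then a j * p j else (1 - a j) * p j)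
        else 0)

/-- The product-form stationary distribution `π(i) = ∏_j (a_j if i_j = 1 else 1 - a_j)`. -/
noncomputable def cubePi (d : ℕ) (a : Fin d → ℝ) : Cube d → ℝ :=
  fun i => ∏ j, (if (i j : ℕ) = 1 then a j else 1 - a j)

/-- Separation: `sep(μ,π) = max_e (1 - μ(e)/π(e))`. -/
noncomputable def sep {E : Type*} [Fintype E] [Nonempty E] (μ π : E → ℝ) : ℝ :=
  Finset.univ.sup' Finset.univ_nonempty fun e => 1 - μ e / π e

/-! ### Auxiliary machinery: the Diaconis–Fill intertwining link -/

noncomputable def lamF {d : ℕ} (a : Fin d → ℝ) (j : Fin d) (u v : Fin 2) : ℝ :=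
  if (u:ℕ) = 1 then (if (v:ℕ) = 1 then a j else 1 - a j) else (if (v:ℕ) = 0 then 1 else 0)

noncomputable def lam (d : ℕ) (a : Fin d → ℝ) : Matrix (Cube d) (Cube d) ℝ :=
  fun s i => ∏ j, lamF a j (s j) (i j)

lemma fin2_cases (b : Fin 2) : b = 0 ∨ b = 1 := by omega

lemma cube_eq_update_iff {d : ℕ} (i x : Cube d) (k : Fin d) (u : Fin 2) :
    (x k = u ∧ ∀ j, j ≠ k → i j = x j) ↔ x = Function.update i k u := by
  constructor
  · rintro ⟨h1, h2⟩
    funext j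
    by_cases hj : j = k
    · subst hj; simp [h1]
    · simp [Function.update_of_ne hj, (h2 j hj).symm]
  · rintro rfl
    refine ⟨Function.update_self _ _ _, fun j hj => ?_⟩
    simp [Function.update_of_ne hj]

lemma sum_flipL {d : ℕ} (f : Cube d → ℝ) (k : Fin d) (i : Cube d) (c : ℝ)
    (P : Prop) [Decidable P] (u : Fin 2) :
    (∑ x : Cube d, f x * (if (x k = u ∧ P ∧ ∀ j, j ≠ k → i j = x j) then c else 0))
      = if P then f (Function.update i k u) * c else 0 := by
  have key : ∀ x : Cube d, (x k = u ∧ P ∧ ∀ j, j ≠ k → i j = x j) ↔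
      (P ∧ x = Function.update i k u) := by
    intro x
    rw [← cube_eq_update_iff i x k u]
    tauto
  simp_rw [key]
  by_cases hP : P
  · simp [hP, mul_ite, Finset.sum_ite_eq' (Finset.univ : Finset (Cube d)) (Function.update i k u)]
  · simp [hP]

lemma sum_flipR {d : ℕ} (f : Cube d → ℝ) (k : Fin d) (s : Cube d) (c : ℝ)
    (P : Prop) [Decidable P] (u : Fin 2) :
    (∑ x : Cube d, (if (P ∧ x k = u ∧ ∀ j, j ≠ k → x j = s j) then c else 0) * f x)
      = if P then c * f (Function.update s k u) else 0 := by
  have key : ∀ x : Cube d, (P ∧ x k = u ∧ ∀ j, j ≠ k → x j = s j) ↔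
      (P ∧ x = Function.update s k u) := by
    intro x
    rw [← cube_eq_update_iff s x k u]
    constructor
    · rintro ⟨hP, h1, h2⟩; exact ⟨hP, h1, fun j hj => (h2 j hj).symm⟩
    · rintro ⟨hP, h1, h2⟩; exact ⟨hP, h1, fun j hj => (h2 j hj).symm⟩
  simp_rw [key]
  by_cases hP : P
  · simp [hP, ite_mul, Finset.sum_ite_eq' (Finset.univ : Finset (Cube d)) (Function.update s k u)]
  · simp [hP]

lemma sum_diag {d : ℕ} (f g : Cube d → ℝ) (i : Cube d) :
    (∑ x : Cube d, f x * (if i = x then g x else 0)) = f i * g i := by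
  simp [mul_ite, Finset.sum_ite_eq]

lemma sum_diag' {d : ℕ} (f g : Cube d → ℝ) (i : Cube d) :
    (∑ x : Cube d, (if x = i then g x else 0) * f x) = g i * f i := by
  simp [ite_mul, Finset.sum_ite_eq']

lemma prod_update {d : ℕ} (F : Fin d → Fin 2 → ℝ) (i : Cube d) (k : Fin d) (b : Fin 2) :
    (∏ j, F j (Function.update i k b j))
      = F k b * ∏ j ∈ Finset.univ.erase k, F j (i j) := by
  rw [← Finset.mul_prod_erase Finset.univ _ (Finset.mem_univ k), Function.update_self]
  congr 1
  refine Finset.prod_congr rfl fun j hj => ?_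
  rw [Function.update_of_ne (Finset.ne_of_mem_erase hj)]

lemma prod_self_eq {d : ℕ} (F : Fin d → Fin 2 → ℝ) (i : Cube d) (k : Fin d) :
    (∏ j, F j (i j)) = F k (i k) * ∏ j ∈ Finset.univ.erase k, F j (i j) :=
  (Finset.mul_prod_erase Finset.univ _ (Finset.mem_univ k)).symm

lemma delta_vecMul {d : ℕ} (M : Matrix (Cube d) (Cube d) ℝ) :
    (fun i : Cube d => if i = 0 then (1 : ℝ) else 0) ᵥ* M = M 0 := by
  funext i
  simp [Matrix.vecMul, dotProduct, ite_mul, Finset.sum_ite_eq']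

lemma perk (d : ℕ) (p a : Fin d → ℝ) (s i : Cube d) (k : Fin d) :
    (if (s k : ℕ) = 0 then p k * lam d a (Function.update s k 1) i else 0)
      - (if (s k : ℕ) = 0 then p k else 0) * lam d a s i
    = (if (i k : ℕ) = 1 then lam d a s (Function.update i k 0) * (a k * p k) else 0)
      + (if (i k : ℕ) = 0 then lam d a s (Function.update i k 1) * ((1 - a k) * p k) else 0)
      - lam d a s i * (if (i k : ℕ) = 0 then a k * p k else (1 - a k) * p k) := by
  have h1 : ∀ b : Fin 2, lam d a s (Function.update i k b)
      = lamF a k (s k) b * ∏ j ∈ Finset.univ.erase k, lamF a j (s j) (i j) := by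
    intro b
    exact prod_update (fun j v => lamF a j (s j) v) i k b
  have h2 : lam d a (Function.update s k 1) i
      = lamF a k 1 (i k) * ∏ j ∈ Finset.univ.erase k, lamF a j (s j) (i j) := by
    exact prod_update (fun j u => lamF a j u (i j)) s k 1
  have h3 : lam d a s i
      = lamF a k (s k) (i k) * ∏ j ∈ Finset.univ.erase k, lamF a j (s j) (i j) :=
    prod_self_eq (fun j u => lamF a j (s j) (i j)) i k
  rw [h1, h1, h2, h3]
  rcases fin2_cases (s k) with hs | hs <;> rcases fin2_cases (i k) with hi | hi <;>
    rw [hs, hi] <;> simp [lamF] <;> ring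

lemma intertwine (d : ℕ) (p a : Fin d → ℝ) :
    cubeCoupon d p * lam d a = lam d a * cubeAntidual d p a := by
  ext s i
  simp only [Matrix.mul_apply, cubeCoupon, cubeAntidual]
  have lhs_eq : (∑ x : Cube d,
      ((∑ k : Fin d, if (s k : ℕ) = 0 ∧ (x k : ℕ) = 1 ∧ (∀ j, j ≠ k → x j = s j)
          then p k else 0) +
        (if x = s then 1 - ∑ j : Fin d, (if (s j : ℕ) = 0 then p j else 0) else 0)) * lam d a x i)
      = (∑ k : Fin d, if (s k : ℕ) = 0 then p k * lam d a (Function.update s k 1) i else 0)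
        + (1 - ∑ j : Fin d, (if (s j : ℕ) = 0 then p j else 0)) * lam d a s i := by
    rw [Finset.sum_congr rfl (fun x _ => add_mul _ _ _), Finset.sum_add_distrib]
    congr 1
    · rw [Finset.sum_congr rfl (fun x _ => Finset.sum_mul _ _ _), Finset.sum_comm]
      refine Finset.sum_congr rfl fun k _ => ?_
      have conv : ∀ x : Cube d,
          (if (s k : ℕ) = 0 ∧ (x k : ℕ) = 1 ∧ (∀ j, j ≠ k → x j = s j) then p k else 0) * lam d a x i
          = (if ((s k : ℕ) = 0 ∧ x k = 1 ∧ (∀ j, j ≠ k → x j = s j)) then p k else 0) * lam d a x i := by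
        intro x
        congr 1
        simp only [show ((x k : ℕ) = 1 ↔ x k = 1) from by omega]
      rw [Finset.sum_congr rfl (fun x _ => conv x),
        sum_flipR (fun x => lam d a x i) k s (p k) ((s k : ℕ) = 0) 1]
    · exact sum_diag' (fun x => lam d a x i) _ s
  rw [lhs_eq]
  have rhs_eq : (∑ x : Cube d, lam d a s x *
      ((∑ k : Fin d, if (x k : ℕ) = 0 ∧ (i k : ℕ) = 1 ∧ (∀ j, j ≠ k → i j = x j)
          then a k * p k else 0) +
       (∑ k : Fin d, if (x k : ℕ) = 1 ∧ (i k : ℕ) = 0 ∧ (∀ j, j ≠ k → i j = x j)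
          then (1 - a k) * p k else 0) +
       (if i = x then 1 - ∑ j : Fin d, (if (x j : ℕ) = 0 then a j * p j else (1 - a j) * p j)
          else 0)))
      = (∑ k : Fin d, if (i k : ℕ) = 1 then lam d a s (Function.update i k 0) * (a k * p k) else 0)
        + (∑ k : Fin d, if (i k : ℕ) = 0 then lam d a s (Function.update i k 1) * ((1 - a k) * p k) else 0)
        + lam d a s i * (1 - ∑ j : Fin d, (if (i j : ℕ) = 0 then a j * p j else (1 - a j) * p j)) := by
    rw [Finset.sum_congr rfl (fun x _ => mul_add _ _ _),
        Finset.sum_congr rfl (fun x _ => congrArg (· + _) (mul_add (lam d a s x) _ _)),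
        Finset.sum_add_distrib, Finset.sum_add_distrib]
    congr 1
    · congr 1
      · rw [Finset.sum_congr rfl (fun x _ => Finset.mul_sum _ _ _), Finset.sum_comm]
        refine Finset.sum_congr rfl fun k _ => ?_
        have conv : ∀ x : Cube d,
            lam d a s x * (if (x k : ℕ) = 0 ∧ (i k : ℕ) = 1 ∧ (∀ j, j ≠ k → i j = x j) then a k * p k else 0)
            = lam d a s x * (if (x k = 0 ∧ (i k : ℕ) = 1 ∧ (∀ j, j ≠ k → i j = x j)) then a k * p k else 0) := by
          intro x
          congr 1
          simp only [show ((x k : ℕ) = 0 ↔ x k = 0) from by omega]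
        rw [Finset.sum_congr rfl (fun x _ => conv x),
          sum_flipL (fun x => lam d a s x) k i (a k * p k) ((i k : ℕ) = 1) 0]
      · rw [Finset.sum_congr rfl (fun x _ => Finset.mul_sum _ _ _), Finset.sum_comm]
        refine Finset.sum_congr rfl fun k _ => ?_
        have conv : ∀ x : Cube d,
            lam d a s x * (if (x k : ℕ) = 1 ∧ (i k : ℕ) = 0 ∧ (∀ j, j ≠ k → i j = x j) then (1 - a k) * p k else 0)
            = lam d a s x * (if (x k = 1 ∧ (i k : ℕ) = 0 ∧ (∀ j, j ≠ k → i j = x j)) then (1 - a k) * p k else 0) := by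
          intro x
          congr 1
          simp only [show ((x k : ℕ) = 1 ↔ x k = 1) from by omega]
        rw [Finset.sum_congr rfl (fun x _ => conv x),
          sum_flipL (fun x => lam d a s x) k i ((1 - a k) * p k) ((i k : ℕ) = 0) 1]
    · exact sum_diag (fun x => lam d a s x) _ i
  rw [rhs_eq]
  have key := Finset.sum_congr rfl (fun k (_ : k ∈ Finset.univ) => perk d p a s i k)
  rw [Finset.sum_sub_distrib, Finset.sum_sub_distrib, Finset.sum_add_distrib,
    ← Finset.sum_mul, ← Finset.mul_sum] at key
  ring_nf
  ring_nf at key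
  linarith [key]

lemma intertwine_pow (d : ℕ) (p a : Fin d → ℝ) (n : ℕ) :
    cubeCoupon d p ^ n * lam d a = lam d a * cubeAntidual d p a ^ n := by
  induction n with
  | zero => simp
  | succ m ih =>
    rw [pow_succ, pow_succ, mul_assoc, intertwine, ← mul_assoc, ih, mul_assoc]

lemma lam_zero_row {d : ℕ} (a : Fin d → ℝ) (i : Cube d) :
    lam d a 0 i = if i = 0 then 1 else 0 := by
  unfold lam
  by_cases h : i = 0
  · subst h
    simp [lamF]
  · rw [if_neg h]
    obtain ⟨j, hj⟩ : ∃ j, i j ≠ 0 := by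
      by_contra hc
      push_neg at hc
      exact h (funext hc)
    apply Finset.prod_eq_zero (Finset.mem_univ j)
    have : (i j : ℕ) = 1 := by omega
    simp [lamF, this]

lemma lam_top_row {d : ℕ} (a : Fin d → ℝ) (i : Cube d) :
    lam d a (fun _ => 1) i = cubePi d a i := by
  unfold lam cubePi lamF
  simp

lemma lam_top_col {d : ℕ} (a : Fin d → ℝ) (s : Cube d) :
    lam d a s (fun _ => 1) = if s = (fun _ => 1) then cubePi d a (fun _ => 1) else 0 := by
  unfold lam cubePi lamF
  by_cases h : s = (fun _ => 1)
  · subst h; simp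
  · rw [if_neg h]
    obtain ⟨j, hj⟩ : ∃ j, s j ≠ 1 := by
      by_contra hc
      push_neg at hc
      exact h (funext hc)
    apply Finset.prod_eq_zero (Finset.mem_univ j)
    have : ¬ (s j : ℕ) = 1 := by omega
    simp [this]

lemma lam_nonneg {d : ℕ} (a : Fin d → ℝ) (ha : ∀ k, 0 < a k ∧ a k < 1) (s i : Cube d) :
    0 ≤ lam d a s i := by
  apply Finset.prod_nonneg
  intro j _
  unfold lamF
  have h1 := (ha j).1
  have h2 := (ha j).2
  split_ifs <;> linarith

lemma cubePi_pos {d : ℕ} (a : Fin d → ℝ) (ha : ∀ k, 0 < a k ∧ a k < 1) (i : Cube d) :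
    0 < cubePi d a i := by
  apply Finset.prod_pos
  intro j _
  have h1 := (ha j).1
  have h2 := (ha j).2
  split_ifs <;> linarith

lemma coupon_nonneg {d : ℕ} (p : Fin d → ℝ) (hp : ∀ j, 0 < p j) (hpsum : ∑ j, p j ≤ 1)
    (s s' : Cube d) : 0 ≤ cubeCoupon d p s s' := by
  unfold cubeCoupon
  have h1 : (0:ℝ) ≤ ∑ k : Fin d, if (s k : ℕ) = 0 ∧ (s' k : ℕ) = 1 ∧ (∀ j, j ≠ k → s' j = s j)
      then p k else 0 := by
    apply Finset.sum_nonneg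
    intro k _
    split_ifs with h
    · exact (hp k).le
    · exact le_refl 0
  have h2 : (0:ℝ) ≤ if s' = s then 1 - ∑ j : Fin d, (if (s j : ℕ) = 0 then p j else 0) else 0 := by
    split_ifs with h
    · have : (∑ j : Fin d, if (s j : ℕ) = 0 then p j else 0) ≤ ∑ j, p j := by
        apply Finset.sum_le_sum
        intro j _
        split_ifs
        · exact le_refl _
        · exact (hp j).le
      linarith
    · exact le_refl 0
  linarith

lemma coupon_pow_nonneg {d : ℕ} (p : Fin d → ℝ) (hp : ∀ j, 0 < p j) (hpsum : ∑ j, p j ≤ 1)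
    (n : ℕ) (s s' : Cube d) : 0 ≤ ((cubeCoupon d p) ^ n) s s' := by
  induction n generalizing s s' with
  | zero =>
    simp [Matrix.one_apply]
    split_ifs <;> norm_num
  | succ m ih =>
    rw [pow_succ, Matrix.mul_apply]
    exact Finset.sum_nonneg fun x _ => mul_nonneg (ih s x) (coupon_nonneg p hp hpsum x s')

/-- Sharpness of the antidual on the hypercube: separation equals the probability
that the coupon collector chain started at `0` is not yet absorbed at `(1,…,1)`. -/
theorem stmt9 (d : ℕ) (hd : 1 ≤ d) (p a : Fin d → ℝ)
    (hp : ∀ j, 0 < p j) (hpsum : ∑ j, p j ≤ 1)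
    (ha : ∀ k, 0 < a k ∧ a k < 1) :
    ∀ n : ℕ,
      sep ((fun i : Cube d => if i = 0 then (1 : ℝ) else 0) ᵥ*
            (cubeAntidual d p a) ^ n) (cubePi d a) =
        1 - ((fun i : Cube d => if i = 0 then (1 : ℝ) else 0) ᵥ*
              (cubeCoupon d p) ^ n) (fun _ => 1) := by
  intro n
  rw [delta_vecMul, delta_vecMul]
  set ν : Cube d → ℝ := ((cubeCoupon d p) ^ n) 0 with hν
  set top : Cube d := (fun _ => 1) with htop
  have hμ : ∀ e : Cube d, ((cubeAntidual d p a) ^ n) 0 e = ∑ s : Cube d, ν s * lam d a s e := by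
    intro e
    have h1 : ((cubeAntidual d p a) ^ n) 0 e = (lam d a * (cubeAntidual d p a) ^ n) 0 e := by
      rw [Matrix.mul_apply]
      have : ∀ x : Cube d, lam d a 0 x * ((cubeAntidual d p a) ^ n) x e
          = (if x = 0 then (1:ℝ) else 0) * ((cubeAntidual d p a) ^ n) x e := by
        intro x; rw [lam_zero_row]
      rw [Finset.sum_congr rfl (fun x _ => this x),
        sum_diag' (fun x => ((cubeAntidual d p a) ^ n) x e) (fun _ => (1:ℝ)) 0, one_mul]
    rw [h1, ← intertwine_pow, Matrix.mul_apply]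
  have hνnn : ∀ s, 0 ≤ ν s := fun s => coupon_pow_nonneg p hp hpsum n 0 s
  have hπpos := cubePi_pos a ha
  unfold sep
  apply le_antisymm
  · apply Finset.sup'_le
    intro e _
    have hge : ν top * cubePi d a e ≤ ((cubeAntidual d p a) ^ n) 0 e := by
      rw [hμ e, ← lam_top_row a e]
      exact Finset.single_le_sum
        (f := fun s => ν s * lam d a s e)
        (fun s _ => mul_nonneg (hνnn s) (lam_nonneg a ha s e))
        (Finset.mem_univ top)
    have : ν top ≤ ((cubeAntidual d p a) ^ n) 0 e / cubePi d a e :=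
      (le_div_iff₀ (hπpos e)).mpr hge
    linarith
  · have heq : ((cubeAntidual d p a) ^ n) 0 top = ν top * cubePi d a top := by
      rw [hμ top]
      have : ∀ s : Cube d, ν s * lam d a s top
          = ν s * (if s = top then cubePi d a top else 0) := by
        intro s; rw [lam_top_col]
      rw [Finset.sum_congr rfl (fun s _ => this s)]
      simp [mul_ite, Finset.sum_ite_eq' (Finset.univ : Finset (Cube d)) top]
    have hf : (1:ℝ) - ν top = 1 - ((cubeAntidual d p a) ^ n) 0 top / cubePi d a top := by
      rw [heq, mul_div_assoc, div_self (ne_of_gt (hπpos top)), mul_one]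
    rw [hf]
    exact Finset.le_sup'
      (fun e => 1 - ((cubeAntidual d p a) ^ n) 0 e / cubePi d a e) (Finset.mem_univ top)
end

section
/- Fix d ≥ 1, integers N_j ≥ 1 and reals p_j > 0 (j = 1,…,d) with Σ_{j=1}^d p_j ≤ 1 and Σ_{j=1}^d (1 − 1/(N_j(N_j+1)))·p_j ≤ 1. Let P be the antidual matrix on E = ∏_{j=1}^d {0,1,…,N_j} with entries P(i, i+s_k) = ((i_k+1)/(i_k+2))·p_k when i_k < N_k; P(i, i−m·s_k) = p_k/((i_k+1)(i_k+2)) when i_k < N_k and 1 ≤ m ≤ i_k; P(i, i−m·s_k) = p_k/(N_k+1) when i_k = N_k and 1 ≤ m ≤ i_k; P(i,i) = 1 − Σ_{j: i_j<N_j} (1 − 1/((i_j+1)(i_j+2)))·p_j − Σ_{j: i_j=N_j} (N_j/(N_j+1))·p_j; other entries 0. Then the characteristic polynomial of P equals ∏_{i ∈ E} (X − (1 − Σ_{j: i_j < N_j} p_j)). In particular, every eigenvalue of P is of the form 1 − Σ_{k∈A} p_k for some subset A ⊆ {1,…,d}. -/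
open Matrix Finset Polynomial
open scoped Classical

/-- State space of the generalized coupon collector problem:
`E = ∏_j {0,1,…,N_j}`. -/
abbrev CCState (d : ℕ) (N : Fin d → ℕ) : Type := ∀ j : Fin d, Fin (N j + 1)

/-- The antidual chain of Theorem 3 (general `N_j`, uniform stationary law). -/
noncomputable def antidualCC (d : ℕ) (N : Fin d → ℕ) (p : Fin d → ℝ) :
    Matrix (CCState d N) (CCState d N) ℝ := fun i i' =>
  (∑ k : Fin d, if (i' k : ℕ) = (i k : ℕ) + 1 ∧ (∀ j, j ≠ k → i' j = i j)
      then (((i k : ℕ) : ℝ) + 1) / (((i k : ℕ) : ℝ) + 2) * p k else 0) +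
  (∑ k : Fin d, if (i' k : ℕ) < (i k : ℕ) ∧ (∀ j, j ≠ k → i' j = i j)
      then (if (i k : ℕ) < N k
            then p k / ((((i k : ℕ) : ℝ) + 1) * (((i k : ℕ) : ℝ) + 2))
            else p k / ((N k : ℝ) + 1))
      else 0) +
  (if i' = i
      then 1 - ∑ j : Fin d, (if (i j : ℕ) < N j
            then (1 - 1 / ((((i j : ℕ) : ℝ) + 1) * (((i j : ℕ) : ℝ) + 2))) * p j
            else ((N j : ℝ) / ((N j : ℝ) + 1)) * p j)
      else 0)

lemma det_tri {n : Type*} [Fintype n] [DecidableEq n] {R : Type*} [CommRing R]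
    (M : Matrix n n R) (w : n → ℕ)
    (h : ∀ i j, i ≠ j → w j ≤ w i → M i j = 0) :
    M.det = ∏ i, M i i := by
  rw [Matrix.det_apply]
  rw [Finset.sum_eq_single (1 : Equiv.Perm n)]
  · simp
  · intro σ _ hσ
    have hex : ∃ i, σ i ≠ i ∧ w i ≤ w (σ i) := by
      by_contra hc
      push_neg at hc
      have hsub : {a | σ a ≠ a} ⊆ ↑σ.support := by
        intro a ha; simpa using ha
      have h1 : ∑ x ∈ σ.support, w (σ x) = ∑ x ∈ σ.support, w x :=
        Equiv.Perm.sum_comp σ σ.support w hsub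
      obtain ⟨a, ha⟩ : σ.support.Nonempty := by
        rw [Finset.nonempty_iff_ne_empty]
        intro he
        exact hσ (by simpa [he] using (Equiv.Perm.support_eq_empty_iff (σ := σ)).mp he)
      have h2 : ∑ x ∈ σ.support, w (σ x) < ∑ x ∈ σ.support, w x := by
        refine Finset.sum_lt_sum (fun i hi => (hc i (Equiv.Perm.mem_support.mp hi)).le)
          ⟨a, ha, hc a (Equiv.Perm.mem_support.mp ha)⟩
      omega
    obtain ⟨i, hi1, hi2⟩ := hex
    rw [show (∏ i : n, M (σ i) i) = 0 from
      Finset.prod_eq_zero (Finset.mem_univ i) (h (σ i) i hi1 hi2), smul_zero]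
  · simp

noncomputable def a1 (n i j : ℕ) : ℝ :=
  (if j = i + 1 then ((i : ℝ) + 1) / ((i : ℝ) + 2) else 0)
  + (if j < i then (if i < n then 1 / (((i : ℝ) + 1) * ((i : ℝ) + 2)) else 1 / ((n : ℝ) + 1)) else 0)
  + (if j = i then -(if i < n then 1 - 1 / (((i : ℝ) + 1) * ((i : ℝ) + 2)) else (n : ℝ) / ((n : ℝ) + 1)) else 0)

noncomputable def c1 (n i j : ℕ) : ℝ :=
  (if j = i + 1 then ((i : ℝ) + 1) / ((i : ℝ) + 2) else 0) + (if j = i ∧ i < n then -1 else 0)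

lemma Ssum (n j : ℕ) : ∀ i, i < n → ∑ x ∈ range (i + 1), a1 n x j
    = (if j ≤ i + 1 then ((i : ℝ) + 1) / ((i : ℝ) + 2) else 0) - (if j ≤ i then 1 else 0) := by
  intro i
  induction i with
  | zero =>
    intro h
    simp only [range_one, sum_singleton, a1, h, Nat.cast_zero]
    norm_num
    split_ifs <;> norm_num <;> omega
  | succ m ih =>
    intro h
    rw [Finset.sum_range_succ, ih (by omega)]
    have hmn : m + 1 < n := h
    simp only [a1, hmn, if_true]
    have h2 : ((m : ℝ) + 1) ≠ 0 := by positivity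
    have h3 : ((m : ℝ) + 2) ≠ 0 := by positivity
    have h4 : ((m : ℝ) + 3) ≠ 0 := by positivity
    push_cast
    split_ifs <;> (try (exfalso; omega)) <;> field_simp <;> ring

lemma Scol (n j : ℕ) (hn : 0 < n) (hj : j ≤ n) : ∑ x ∈ range (n + 1), a1 n x j = 0 := by
  obtain ⟨m, rfl⟩ : ∃ m, n = m + 1 := ⟨n - 1, by omega⟩
  rw [Finset.sum_range_succ, Ssum _ j m (by omega)]
  have hlt : ¬ (m + 1 < m + 1) := by omega
  simp only [a1, hlt, if_false]
  have h3 : ((m : ℝ) + 2) ≠ 0 := by positivity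
  push_cast
  split_ifs <;> (try (exfalso; omega)) <;> field_simp <;> ring

lemma oneD (n i j : ℕ) (hn : 0 < n) (hi : i ≤ n) (hj : j ≤ n) :
    ∑ x ∈ range (n + 1), (if x ≤ i then (1 : ℝ) else 0) * a1 n x j
      = ∑ x ∈ range (n + 1), c1 n i x * (if j ≤ x then (1 : ℝ) else 0) := by
  have hL : ∑ x ∈ range (n + 1), (if x ≤ i then (1 : ℝ) else 0) * a1 n x j
      = ∑ x ∈ range (i + 1), a1 n x j := by
    simp only [ite_mul, one_mul, zero_mul, ← Finset.sum_filter]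
    congr 1
    ext a
    simp only [mem_filter, mem_range]
    omega
  rw [hL]
  by_cases hin : i < n
  · rw [Ssum n j i hin]
    have hRa : ∀ x ∈ range (n + 1), c1 n i x * (if j ≤ x then (1 : ℝ) else 0)
        = (if x = i + 1 then ((i : ℝ) + 1) / ((i : ℝ) + 2) * (if j ≤ x then (1 : ℝ) else 0) else 0)
          + (if x = i then -(if j ≤ x then (1 : ℝ) else 0) else 0) := by
      intro x _
      simp only [c1, hin, and_true, add_mul, ite_mul, zero_mul]
      ring_nf
    rw [Finset.sum_congr rfl hRa, Finset.sum_add_distrib,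
      Finset.sum_ite_eq' (range (n + 1)) (i + 1), Finset.sum_ite_eq' (range (n + 1)) i]
    have m1 : i + 1 ∈ range (n + 1) := by simp; omega
    have m2 : i ∈ range (n + 1) := by simp; omega
    rw [if_pos m1, if_pos m2]
    split_ifs <;> (try (exfalso; omega)) <;> ring
  · have hi' : i = n := by omega
    subst hi'
    rw [Scol i j hn hj]
    rw [eq_comm]
    apply Finset.sum_eq_zero
    intro x hx
    simp only [mem_range] at hx
    have h1 : ¬ (x = i + 1) := by omega
    have h2 : ¬ (x = i ∧ i < i) := by omega
    simp [c1, h1, h2]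

noncomputable def Tm (d : ℕ) (N : Fin d → ℕ) : Matrix (CCState d N) (CCState d N) ℝ :=
  fun i i' => ∏ k, (if (i' k : ℕ) ≤ (i k : ℕ) then (1 : ℝ) else 0)

noncomputable def Bm (d : ℕ) (N : Fin d → ℕ) (p : Fin d → ℝ) :
    Matrix (CCState d N) (CCState d N) ℝ := fun i i' =>
  (if i' = i then 1 else 0)
    + ∑ k, p k * ((if ∀ j, j ≠ k → i' j = i j then (1 : ℝ) else 0) * c1 (N k) (i k) (i' k))

lemma eq_of_coords {d : ℕ} {N : Fin d → ℕ} (i i' : CCState d N) (k : Fin d)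
    (h1 : ∀ j, j ≠ k → i' j = i j) (h2 : (i' k : ℕ) = (i k : ℕ)) : i' = i := by
  funext j
  by_cases hj : j = k
  · subst hj; exact Fin.ext h2
  · exact h1 j hj

lemma decompP {d : ℕ} {N : Fin d → ℕ} (p : Fin d → ℝ) (i i' : CCState d N) :
    antidualCC d N p i i' = (if i' = i then 1 else 0)
      + ∑ k, p k * ((if ∀ j, j ≠ k → i' j = i j then (1 : ℝ) else 0) * a1 (N k) (i k) (i' k)) := by
  have split : ∀ k : Fin d,
      p k * ((if ∀ j, j ≠ k → i' j = i j then (1 : ℝ) else 0) * a1 (N k) (i k) (i' k))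
      = p k * ((if ∀ j, j ≠ k → i' j = i j then (1 : ℝ) else 0) *
          (if (i' k : ℕ) = (i k : ℕ) + 1 then (((i k : ℕ) : ℝ) + 1) / (((i k : ℕ) : ℝ) + 2) else 0))
        + p k * ((if ∀ j, j ≠ k → i' j = i j then (1 : ℝ) else 0) *
          (if (i' k : ℕ) < (i k : ℕ)
            then (if (i k : ℕ) < N k then 1 / ((((i k : ℕ) : ℝ) + 1) * (((i k : ℕ) : ℝ) + 2))
              else 1 / ((N k : ℝ) + 1)) else 0))
        + p k * ((if ∀ j, j ≠ k → i' j = i j then (1 : ℝ) else 0) *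
          (if (i' k : ℕ) = (i k : ℕ) then
            -(if (i k : ℕ) < N k then 1 - 1 / ((((i k : ℕ) : ℝ) + 1) * (((i k : ℕ) : ℝ) + 2))
              else (N k : ℝ) / ((N k : ℝ) + 1)) else 0)) := by
    intro k
    simp only [a1]
    ring
  rw [Finset.sum_congr rfl (fun k _ => split k), Finset.sum_add_distrib,
    Finset.sum_add_distrib]
  have e1 : ∀ k : Fin d, (if (i' k : ℕ) = (i k : ℕ) + 1 ∧ (∀ j, j ≠ k → i' j = i j)
      then (((i k : ℕ) : ℝ) + 1) / (((i k : ℕ) : ℝ) + 2) * p k else 0)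
      = p k * ((if ∀ j, j ≠ k → i' j = i j then (1 : ℝ) else 0) *
          (if (i' k : ℕ) = (i k : ℕ) + 1 then (((i k : ℕ) : ℝ) + 1) / (((i k : ℕ) : ℝ) + 2) else 0)) := by
    intro k
    split_ifs <;> (try (exfalso; tauto)) <;> ring
  have e2 : ∀ k : Fin d, (if (i' k : ℕ) < (i k : ℕ) ∧ (∀ j, j ≠ k → i' j = i j)
      then (if (i k : ℕ) < N k
            then p k / ((((i k : ℕ) : ℝ) + 1) * (((i k : ℕ) : ℝ) + 2))
            else p k / ((N k : ℝ) + 1)) else 0)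
      = p k * ((if ∀ j, j ≠ k → i' j = i j then (1 : ℝ) else 0) *
          (if (i' k : ℕ) < (i k : ℕ)
            then (if (i k : ℕ) < N k then 1 / ((((i k : ℕ) : ℝ) + 1) * (((i k : ℕ) : ℝ) + 2))
              else 1 / ((N k : ℝ) + 1)) else 0)) := by
    intro k
    split_ifs <;> (try (exfalso; tauto)) <;> ring
  have e3 : (if i' = i
      then 1 - ∑ j : Fin d, (if (i j : ℕ) < N j
            then (1 - 1 / ((((i j : ℕ) : ℝ) + 1) * (((i j : ℕ) : ℝ) + 2))) * p j
            else ((N j : ℝ) / ((N j : ℝ) + 1)) * p j)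
      else 0)
      = (if i' = i then (1 : ℝ) else 0) + ∑ k, p k * ((if ∀ j, j ≠ k → i' j = i j then (1 : ℝ) else 0) *
          (if (i' k : ℕ) = (i k : ℕ) then
            -(if (i k : ℕ) < N k then 1 - 1 / ((((i k : ℝ) : ℝ) + 1) * (((i k : ℕ) : ℝ) + 2))
              else (N k : ℝ) / ((N k : ℝ) + 1)) else 0)) := by
    by_cases h : i' = i
    · subst h
      rw [if_pos rfl, if_pos rfl]
      have hterm : ∀ k : Fin d, p k * ((if ∀ j, j ≠ k → i' j = i' j then (1 : ℝ) else 0) *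
          (if (i' k : ℕ) = (i' k : ℕ) then
            -(if (i' k : ℕ) < N k then 1 - 1 / ((((i' k : ℕ) : ℝ) + 1) * (((i' k : ℕ) : ℝ) + 2))
              else (N k : ℝ) / ((N k : ℝ) + 1)) else 0))
          = -(if (i' k : ℕ) < N k
            then (1 - 1 / ((((i' k : ℕ) : ℝ) + 1) * (((i' k : ℕ) : ℝ) + 2))) * p k
            else ((N k : ℝ) / ((N k : ℝ) + 1)) * p k) := by
        intro k
        rw [if_pos (fun j _ => rfl : ∀ j : Fin d, j ≠ k → i' j = i' j), if_pos rfl]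
        split_ifs <;> ring
      rw [Finset.sum_congr rfl (fun k _ => hterm k)]
      rw [Finset.sum_neg_distrib]
      ring
    · rw [if_neg h, if_neg h, eq_comm]
      simp only [zero_add]
      apply Finset.sum_eq_zero
      intro k _
      by_cases h2 : ∀ j, j ≠ k → i' j = i j
      · by_cases h3 : (i' k : ℕ) = (i k : ℕ)
        · exact absurd (eq_of_coords i i' k h2 h3) h
        · simp [h3]
      · simp [h2]
  rw [antidualCC, Finset.sum_congr rfl (fun k _ => e1 k), Finset.sum_congr rfl (fun k _ => e2 k), e3]
  ring

lemma ind_forall {d : ℕ} (k : Fin d) (P : Fin d → Prop) :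
    (if (∀ j, j ≠ k → P j) then (1 : ℝ) else 0)
      = ∏ j ∈ Finset.univ.erase k, (if P j then (1 : ℝ) else 0) := by
  split_ifs with h
  · rw [eq_comm]
    apply Finset.prod_eq_one
    intro j hj
    rw [if_pos (h j (Finset.ne_of_mem_erase hj))]
  · push_neg at h
    obtain ⟨j, hjk, hj⟩ := h
    rw [eq_comm]
    apply Finset.prod_eq_zero (Finset.mem_erase.mpr ⟨hjk, Finset.mem_univ j⟩)
    rw [if_neg hj]

lemma TPBT {d : ℕ} (N : Fin d → ℕ) (hN : ∀ j, 1 ≤ N j) (p : Fin d → ℝ) :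
    Tm d N * antidualCC d N p = Bm d N p * Tm d N := by
  ext i i'
  rw [Matrix.mul_apply, Matrix.mul_apply]
  simp only [decompP p, Bm]
  simp only [mul_add, add_mul, Finset.sum_add_distrib]
  congr 1
  · -- delta parts
    have l1 : ∀ a : CCState d N, Tm d N i a * (if i' = a then (1 : ℝ) else 0)
        = if i' = a then Tm d N i a else 0 := by
      intro a; split_ifs <;> simp
    have l2 : ∀ a : CCState d N, (if a = i then (1 : ℝ) else 0) * Tm d N a i'
        = if a = i then Tm d N a i' else 0 := by
      intro a; split_ifs <;> simp
    rw [Finset.sum_congr rfl (fun a _ => l1 a), Finset.sum_congr rfl (fun a _ => l2 a),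
      Finset.sum_ite_eq Finset.univ i' (fun a => Tm d N i a),
      Finset.sum_ite_eq' Finset.univ i (fun a => Tm d N a i')]
    simp
  · -- main parts
    simp only [Finset.mul_sum, Finset.sum_mul]
    rw [Finset.sum_comm]
    conv_rhs => rw [Finset.sum_comm]
    apply Finset.sum_congr rfl
    intro k _
    -- LHS summands to product form
    have hF : ∀ a : CCState d N,
        Tm d N i a * (p k * ((if ∀ j, j ≠ k → i' j = a j then (1 : ℝ) else 0) * a1 (N k) (a k) (i' k)))
        = p k * ∏ j, ((if (a j : ℕ) ≤ (i j : ℕ) then (1 : ℝ) else 0) *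
            (if j = k then a1 (N j) (a j) ((i' j : ℕ)) else (if i' j = a j then (1 : ℝ) else 0))) := by
      intro a
      simp only [Tm]
      by_cases h : ∀ j, j ≠ k → i' j = a j
      · rw [if_pos h]
        rw [← Finset.mul_prod_erase Finset.univ
          (fun j => ((if (a j : ℕ) ≤ (i j : ℕ) then (1 : ℝ) else 0) *
              (if j = k then a1 (N j) (a j) ((i' j : ℕ)) else (if i' j = a j then (1 : ℝ) else 0))))
          (Finset.mem_univ k)]
        rw [if_pos rfl]
        have heq : ∀ j ∈ Finset.univ.erase k,
            ((if (a j : ℕ) ≤ (i j : ℕ) then (1 : ℝ) else 0) *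
              (if j = k then a1 (N j) (a j) ((i' j : ℕ)) else (if i' j = a j then (1 : ℝ) else 0)))
            = (if (a j : ℕ) ≤ (i j : ℕ) then (1 : ℝ) else 0) := by
          intro j hj
          rw [if_neg (Finset.mem_erase.mp hj).1, if_pos (h j (Finset.mem_erase.mp hj).1), mul_one]
        rw [Finset.prod_congr rfl heq]
        rw [← Finset.mul_prod_erase Finset.univ
          (fun j => (if (a j : ℕ) ≤ (i j : ℕ) then (1 : ℝ) else 0)) (Finset.mem_univ k)]
        ring
      · rw [if_neg h]
        push_neg at h
        obtain ⟨j0, hj0, hj0'⟩ := h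
        rw [show (∏ j, ((if (a j : ℕ) ≤ (i j : ℕ) then (1 : ℝ) else 0) *
            (if j = k then a1 (N j) (a j) ((i' j : ℕ)) else (if i' j = a j then (1 : ℝ) else 0)))) = 0 from
          Finset.prod_eq_zero (Finset.mem_univ j0)
            (by rw [if_neg hj0, if_neg hj0', mul_zero])]
        ring
    have hG : ∀ a : CCState d N,
        (p k * ((if ∀ j, j ≠ k → a j = i j then (1 : ℝ) else 0) * c1 (N k) (i k) (a k))) * Tm d N a i'
        = p k * ∏ j, ((if j = k then c1 (N j) ((i j : ℕ)) ((a j : ℕ)) else (if a j = i j then (1 : ℝ) else 0)) *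
            (if (i' j : ℕ) ≤ (a j : ℕ) then (1 : ℝ) else 0)) := by
      intro a
      simp only [Tm]
      by_cases h : ∀ j, j ≠ k → a j = i j
      · rw [if_pos h]
        rw [← Finset.mul_prod_erase Finset.univ
          (fun j => ((if j = k then c1 (N j) ((i j : ℕ)) ((a j : ℕ)) else (if a j = i j then (1 : ℝ) else 0)) *
              (if (i' j : ℕ) ≤ (a j : ℕ) then (1 : ℝ) else 0))) (Finset.mem_univ k)]
        rw [if_pos rfl]
        have heq : ∀ j ∈ Finset.univ.erase k,
            ((if j = k then c1 (N j) ((i j : ℕ)) ((a j : ℕ)) else (if a j = i j then (1 : ℝ) else 0)) *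
              (if (i' j : ℕ) ≤ (a j : ℕ) then (1 : ℝ) else 0))
            = (if (i' j : ℕ) ≤ (a j : ℕ) then (1 : ℝ) else 0) := by
          intro j hj
          rw [if_neg (Finset.mem_erase.mp hj).1, if_pos (h j (Finset.mem_erase.mp hj).1), one_mul]
        rw [Finset.prod_congr rfl heq]
        rw [← Finset.mul_prod_erase Finset.univ
          (fun j => (if (i' j : ℕ) ≤ (a j : ℕ) then (1 : ℝ) else 0)) (Finset.mem_univ k)]
        ring
      · rw [if_neg h]
        push_neg at h
        obtain ⟨j0, hj0, hj0'⟩ := h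
        rw [show (∏ j, ((if j = k then c1 (N j) ((i j : ℕ)) ((a j : ℕ)) else (if a j = i j then (1 : ℝ) else 0)) *
            (if (i' j : ℕ) ≤ (a j : ℕ) then (1 : ℝ) else 0))) = 0 from
          Finset.prod_eq_zero (Finset.mem_univ j0)
            (by rw [if_neg hj0, if_neg hj0', zero_mul])]
        ring
    rw [Finset.sum_congr rfl (fun a _ => hF a), Finset.sum_congr rfl (fun a _ => hG a),
      ← Finset.mul_sum, ← Finset.mul_sum]
    congr 1
    rw [← Fintype.prod_sum (fun j (x : Fin (N j + 1)) =>
      (if (x : ℕ) ≤ (i j : ℕ) then (1 : ℝ) else 0) *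
        (if j = k then a1 (N j) x ((i' j : ℕ)) else (if i' j = x then (1 : ℝ) else 0)))]
    rw [← Fintype.prod_sum (fun j (x : Fin (N j + 1)) =>
      (if j = k then c1 (N j) ((i j : ℕ)) x else (if x = i j then (1 : ℝ) else 0)) *
        (if (i' j : ℕ) ≤ (x : ℕ) then (1 : ℝ) else 0))]
    apply Finset.prod_congr rfl
    intro j _
    by_cases hj : j = k
    · subst hj
      simp only [eq_self_iff_true, if_true]
      rw [Fin.sum_univ_eq_sum_range
        (fun x => (if x ≤ (i j : ℕ) then (1 : ℝ) else 0) * a1 (N j) x ((i' j : ℕ))) (N j + 1)]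
      rw [Fin.sum_univ_eq_sum_range
        (fun x => c1 (N j) ((i j : ℕ)) x * (if (i' j : ℕ) ≤ x then (1 : ℝ) else 0)) (N j + 1)]
      exact oneD (N j) (i j) (i' j) (hN j) (Fin.is_le _) (Fin.is_le _)
    · simp only [if_neg hj]
      have l1 : ∀ x : Fin (N j + 1),
          (if (x : ℕ) ≤ (i j : ℕ) then (1 : ℝ) else 0) * (if i' j = x then (1 : ℝ) else 0)
          = if i' j = x then (if ((i' j : ℕ)) ≤ (i j : ℕ) then (1 : ℝ) else 0) else 0 := by
        intro x
        by_cases h : i' j = x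
        · rw [if_pos h, if_pos h, ← h, mul_one]
        · rw [if_neg h, if_neg h, mul_zero]
      have l2 : ∀ x : Fin (N j + 1),
          (if x = i j then (1 : ℝ) else 0) * (if (i' j : ℕ) ≤ (x : ℕ) then (1 : ℝ) else 0)
          = if x = i j then (if ((i' j : ℕ)) ≤ (i j : ℕ) then (1 : ℝ) else 0) else 0 := by
        intro x
        by_cases h : x = i j
        · rw [if_pos h, if_pos h, h, one_mul]
        · rw [if_neg h, if_neg h, zero_mul]
      rw [Finset.sum_congr rfl (fun x _ => l1 x), Finset.sum_congr rfl (fun x _ => l2 x),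
        Finset.sum_ite_eq Finset.univ (i' j), Finset.sum_ite_eq' Finset.univ (i j)]
      simp

lemma Bdiag {d : ℕ} {N : Fin d → ℕ} (p : Fin d → ℝ) (i : CCState d N) :
    Bm d N p i i = 1 - ∑ j, (if (i j : ℕ) < N j then p j else 0) := by
  unfold Bm
  rw [if_pos rfl]
  have hterm : ∀ k : Fin d,
      p k * ((if ∀ j, j ≠ k → i j = i j then (1 : ℝ) else 0) * c1 (N k) (i k) (i k))
      = -(if (i k : ℕ) < N k then p k else 0) := by
    intro k
    rw [if_pos (fun j _ => rfl : ∀ j : Fin d, j ≠ k → i j = i j)]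
    have h1 : ¬ ((i k : ℕ) = (i k : ℕ) + 1) := by omega
    simp only [c1, h1, if_false, true_and, zero_add, if_pos rfl]
    split_ifs <;> ring
  rw [Finset.sum_congr rfl (fun k _ => hterm k), Finset.sum_neg_distrib]
  ring

lemma Bzero {d : ℕ} {N : Fin d → ℕ} (p : Fin d → ℝ) (i i' : CCState d N) (hne : i ≠ i')
    (hw : ∑ k, (i' k : ℕ) ≤ ∑ k, (i k : ℕ)) : Bm d N p i i' = 0 := by
  unfold Bm
  rw [if_neg (fun h => hne h.symm), zero_add]
  apply Finset.sum_eq_zero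
  intro k _
  by_cases h2 : ∀ j, j ≠ k → i' j = i j
  · by_cases h3 : (i' k : ℕ) = (i k : ℕ) + 1
    · exfalso
      have e1 : (i' k : ℕ) + ∑ j ∈ Finset.univ.erase k, (i' j : ℕ) = ∑ j, (i' j : ℕ) :=
        Finset.add_sum_erase Finset.univ (fun j => (i' j : ℕ)) (Finset.mem_univ k)
      have e2 : (i k : ℕ) + ∑ j ∈ Finset.univ.erase k, (i j : ℕ) = ∑ j, (i j : ℕ) :=
        Finset.add_sum_erase Finset.univ (fun j => (i j : ℕ)) (Finset.mem_univ k)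
      have e3 : ∑ j ∈ Finset.univ.erase k, (i' j : ℕ) = ∑ j ∈ Finset.univ.erase k, (i j : ℕ) :=
        Finset.sum_congr rfl (fun j hj => by rw [h2 j (Finset.mem_erase.mp hj).1])
      omega
    · by_cases h4 : (i' k : ℕ) = (i k : ℕ)
      · exact absurd (eq_of_coords i i' k h2 h4).symm hne
      · simp [c1, h3, h4]
  · simp [h2]

lemma Tzero {d : ℕ} {N : Fin d → ℕ} (i i' : CCState d N) (hne : i ≠ i')
    (hw : ∑ k, (i k : ℕ) ≤ ∑ k, (i' k : ℕ)) : Tm d N i i' = 0 := by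
  unfold Tm
  by_contra h
  have hall : ∀ k, (i' k : ℕ) ≤ (i k : ℕ) := by
    intro k
    by_contra hk
    exact h (Finset.prod_eq_zero (Finset.mem_univ k) (if_neg hk))
  have hnall : ¬ (∀ k, (i' k : ℕ) = (i k : ℕ)) := by
    intro hk
    exact hne (funext (fun k => Fin.ext (hk k))).symm
  push_neg at hnall
  obtain ⟨k0, hk0⟩ := hnall
  have hlt := Finset.sum_lt_sum (fun k (_ : k ∈ Finset.univ) => hall k)
    ⟨k0, Finset.mem_univ k0, lt_of_le_of_ne (hall k0) hk0⟩
  omega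

lemma detT {d : ℕ} (N : Fin d → ℕ) : (Tm d N).det = 1 := by
  rw [← Matrix.det_transpose]
  rw [det_tri (Tm d N)ᵀ (fun i : CCState d N => ∑ k, (i k : ℕ))
    (fun a b hne hw => Tzero b a (fun h => hne h.symm) hw)]
  apply Finset.prod_eq_one
  intro i _
  simp [Tm, Matrix.transpose_apply]

/-- The eigenvalues of the antidual chain are `1 - Σ_{k∈A} p_k`, `A ⊆ {1,…,d}`. -/
theorem stmt10 (d : ℕ) (hd : 1 ≤ d) (N : Fin d → ℕ) (hN : ∀ j, 1 ≤ N j)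
    (p : Fin d → ℝ) (hp : ∀ j, 0 < p j) (hpsum : ∑ j, p j ≤ 1)
    (hcond : ∑ j, (1 - 1 / ((N j : ℝ) * ((N j : ℝ) + 1))) * p j ≤ 1) :
    (antidualCC d N p).charpoly =
      ∏ i : CCState d N,
        (Polynomial.X - Polynomial.C (1 - ∑ j, if (i j : ℕ) < N j then p j else 0)) ∧
    ∀ x : ℝ, (antidualCC d N p).charpoly.IsRoot x →
      ∃ A : Finset (Fin d), x = 1 - ∑ k ∈ A, p k := by
  have hchar : (antidualCC d N p).charpoly
      = ∏ i : CCState d N, (X - C (1 - ∑ j, if (i j : ℕ) < N j then p j else 0)) := by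
    have hTP := TPBT N hN p
    have key : (Tm d N).map (Polynomial.C : ℝ → ℝ[X]) * charmatrix (antidualCC d N p)
        = charmatrix (Bm d N p) * (Tm d N).map Polynomial.C := by
      rw [charmatrix, charmatrix]
      simp only [RingHom.mapMatrix_apply]
      rw [mul_sub, sub_mul]
      refine congrArg₂ (· - ·) ?_ ?_
      · exact (Matrix.scalar_commute (X : ℝ[X]) (fun r => Commute.all _ _)
          ((Tm d N).map Polynomial.C)).symm.eq
      · rw [← Matrix.map_mul, hTP, Matrix.map_mul]
    have hdet := congrArg Matrix.det key
    rw [Matrix.det_mul, Matrix.det_mul] at hdet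
    have hdT : ((Tm d N).map (Polynomial.C : ℝ → ℝ[X])).det = 1 := by
      rw [← RingHom.mapMatrix_apply, ← RingHom.map_det, detT, _root_.map_one]
    rw [hdT, one_mul, mul_one] at hdet
    rw [Matrix.charpoly, hdet]
    rw [det_tri (charmatrix (Bm d N p)) (fun i : CCState d N => ∑ k, (i k : ℕ))
      (fun a b hne hw => by
        rw [charmatrix_apply_ne _ _ _ hne, Bzero p a b hne hw, map_zero, neg_zero])]
    apply Finset.prod_congr rfl
    intro i _
    rw [charmatrix_apply_eq, Bdiag]
  refine ⟨hchar, ?_⟩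
  intro x hx
  rw [Polynomial.IsRoot, hchar, Polynomial.eval_prod] at hx
  obtain ⟨i, -, hi⟩ := Finset.prod_eq_zero_iff.mp hx
  simp only [Polynomial.eval_sub, Polynomial.eval_X, Polynomial.eval_C] at hi
  refine ⟨Finset.univ.filter (fun j => (i j : ℕ) < N j), ?_⟩
  have hxv : x = 1 - ∑ j, (if (i j : ℕ) < N j then p j else 0) := by linarith
  rw [hxv, Finset.sum_filter]
end

section
/- Let M ≥ 2, let π be a probability vector on {1,…,M} with all entries positive and H(k) := Σ_{j=1}^k π(j), let a = (a_1,…,a_M) be a probability vector with nonnegative entries, and let p_1,…,p_{M−1} ∈ [0,1] (set p_M := 0). Define the matrix P on {1,…,M} by: P(1,1) = 1 − (π(2)/(π(1)+π(2)))·p_1; P(1,2) = (π(2)/(π(1)+π(2)))·p_1; for 1 < k < M: P(k,s) = (π(s)/π(k))·[p_{k−1}(1 − H(k−1)/H(k)) − p_k(1 − H(k)/H(k+1))] for s < k, P(k,k) = 1 − p_k(1 − H(k)/H(k+1)) − p_{k−1}·H(k−1)/H(k), P(k,k+1) = p_k·(H(k)/H(k+1))·(π(k+1)/π(k)); P(M,s)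 = p_{M−1}·π(s) for s ≤ M−1 and P(M,M) = 1 − p_{M−1} + p_{M−1}·π(M); all other entries 0. Assume all entries of P are nonnegative. Then: (a) each row of P sums to 1, so P is row-stochastic; (b) πP = π; (c) with the total order on {1,…,M} and the link Λ(k,s) := π(s)·1(s ≤ k)/H(k), one has Λ P = P* Λ, where P* is the pure-birth chain with parameters p_1,…,p_{M−1}; (d) ν := a Λ satisfies ν(k) = π(k)·Σ_{i=k}^M a_i/H(i) and is a probability vector; (e) the characteristic polynomial of P equals (X − 1)·∏_{k=1}^{M−1} (X − (1 − p_k)). -/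
open Matrix Finset Polynomial

/-- `H(k) = Σ_{j=1}^k π(j)` (paper indexing `1,…,M`). -/
noncomputable def HId (π : ℕ → ℝ) (n : ℕ) : ℝ := ∑ j ∈ Finset.Icc 1 n, π j

/-- Entries of the prescribed-FSST chain, in paper indexing `k, s ∈ {1,…,M}`. -/
noncomputable def fsstP (M : ℕ) (π p : ℕ → ℝ) (k s : ℕ) : ℝ :=
  if k = 1 then
    (if s = 1 then 1 - (π 2 / (π 1 + π 2)) * p 1
     else if s = 2 then (π 2 / (π 1 + π 2)) * p 1
     else 0)
  else if k = M then
    (if s ≤ M - 1 then p (M - 1) * π s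
     else if s = M then 1 - p (M - 1) + p (M - 1) * π M
     else 0)
  else
    (if s < k then
        (π s / π k) * (p (k - 1) * (1 - HId π (k - 1) / HId π k) -
          p k * (1 - HId π k / HId π (k + 1)))
     else if s = k then
        1 - p k * (1 - HId π k / HId π (k + 1)) - p (k - 1) * (HId π (k - 1) / HId π k)
     else if s = k + 1 then
        p k * (HId π k / HId π (k + 1)) * (π (k + 1) / π k)
     else 0)

/-- The prescribed-FSST chain as a matrix on `Fin M` (state `k` ↔ `(k:ℕ)+1`). -/
noncomputable def fsstMat (M : ℕ) (π p : ℕ → ℝ) : Matrix (Fin M) (Fin M) ℝ :=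
  fun k s => fsstP M π p ((k : ℕ) + 1) ((s : ℕ) + 1)

/-- The pure-birth chain `P*` on `{1,…,M}` with parameters `p_1,…,p_{M−1}`. -/
noncomputable def pureBirth (M : ℕ) (p : ℕ → ℝ) : Matrix (Fin M) (Fin M) ℝ :=
  fun k s =>
    if (s : ℕ) = (k : ℕ) + 1 then p ((k : ℕ) + 1)
    else if s = k then (if (k : ℕ) + 1 = M then 1 else 1 - p ((k : ℕ) + 1))
    else 0

/-- The link `Λ(k,s) = π(s)·1(s ≤ k)/H(k)` for the total order on `{1,…,M}`. -/
noncomputable def fsstLink (M : ℕ) (π : ℕ → ℝ) : Matrix (Fin M) (Fin M) ℝ :=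
  fun k s => if (s : ℕ) ≤ (k : ℕ) then π ((s : ℕ) + 1) / HId π ((k : ℕ) + 1) else 0

/-- partial weighted column sums `F(k,s) = ∑_{j=1}^k π_j P(j,s)`. -/
noncomputable def fsstF (M : ℕ) (π p : ℕ → ℝ) (k s : ℕ) : ℝ :=
  ∑ j ∈ Finset.Icc 1 k, π j * fsstP M π p j s

lemma HId_one (π : ℕ → ℝ) : HId π 1 = π 1 := by simp [HId]

lemma HId_succ (π : ℕ → ℝ) (n : ℕ) : HId π (n + 1) = HId π n + π (n + 1) := by
  simpa [HId] using Finset.sum_Icc_succ_top (by omega : 1 ≤ n + 1) π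

lemma HId_pos {M : ℕ} {π : ℕ → ℝ} (hπpos : ∀ k, 1 ≤ k → k ≤ M → 0 < π k)
    {n : ℕ} (h1 : 1 ≤ n) (h2 : n ≤ M) : 0 < HId π n := by
  refine Finset.sum_pos (fun i hi => ?_) ⟨1, by simp [h1]⟩
  simp only [Finset.mem_Icc] at hi
  exact hπpos i hi.1 (le_trans hi.2 h2)

lemma sum_ite_le (f : ℕ → ℝ) {m M : ℕ} (h : m ≤ M) :
    ∑ s ∈ Finset.Icc 1 M, (if s ≤ m then f s else 0) = ∑ s ∈ Finset.Icc 1 m, f s := by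
  rw [← Finset.sum_subset (Finset.Icc_subset_Icc_right h)
    (fun x hx hnx => by simp only [Finset.mem_Icc] at hx hnx; rw [if_neg (by omega)])]
  exact Finset.sum_congr rfl fun x hx => by
    simp only [Finset.mem_Icc] at hx; rw [if_pos hx.2]

/-- key formula for the partial sums, `1 ≤ k ≤ M-1`. -/
lemma fsstF_eq {M : ℕ} (hM : 2 ≤ M) {π : ℕ → ℝ} (p : ℕ → ℝ)
    (hπpos : ∀ k, 1 ≤ k → k ≤ M → 0 < π k) :
    ∀ k, 1 ≤ k → k ≤ M - 1 → ∀ s, 1 ≤ s →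
      fsstF M π p k s = π s * ((if s ≤ k + 1 then p k * (HId π k / HId π (k + 1)) else 0)
        + (if s ≤ k then 1 - p k else 0)) := by
  intro k hk
  induction k, hk using Nat.le_induction with
  | base =>
    intro hk1 s hs
    have h1 : (0:ℝ) < π 1 := hπpos 1 (by omega) (by omega)
    have h2 : (0:ℝ) < π 2 := hπpos 2 (by omega) (by omega)
    have h12 : π 1 + π 2 ≠ 0 := by positivity
    have hH2 : HId π 2 = π 1 + π 2 := by rw [show (2:ℕ) = 1 + 1 from rfl, HId_succ, HId_one]
    have hF : fsstF M π p 1 s = π 1 * fsstP M π p 1 s := by simp [fsstF]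
    rw [hF]
    rcases (by omega : s = 1 ∨ s = 2 ∨ 3 ≤ s) with h | h | h
    · subst h
      have hv : fsstP M π p 1 1 = 1 - π 2 / (π 1 + π 2) * p 1 := by simp [fsstP]
      rw [hv, if_pos (by omega), if_pos le_rfl, HId_one, hH2,
        mul_right_inj' (ne_of_gt h1)]
      field_simp
      ring
    · subst h
      have hv : fsstP M π p 1 2 = π 2 / (π 1 + π 2) * p 1 := by norm_num [fsstP]
      rw [hv, if_pos (by omega), if_neg (by omega), HId_one, hH2]
      field_simp
      ring
    · have hv : fsstP M π p 1 s = 0 := by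
        rw [fsstP, if_pos rfl, if_neg (by omega), if_neg (by omega)]
      rw [hv, if_neg (by omega), if_neg (by omega)]
      ring
  | succ k hk ih =>
    intro hk1 s hs
    have hkM : k + 1 < M := by omega
    have hπk1 : (0:ℝ) < π (k + 1) := hπpos _ (by omega) (by omega)
    have hπk2 : (0:ℝ) < π (k + 2) := hπpos _ (by omega) (by omega)
    have hHk : (0:ℝ) < HId π k := HId_pos hπpos (by omega) (by omega)
    have hHk1 : (0:ℝ) < HId π (k + 1) := HId_pos hπpos (by omega) (by omega)
    have hHk2 : (0:ℝ) < HId π (k + 2) := HId_pos hπpos (by omega) (by omega)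
    have hF : fsstF M π p (k + 1) s = fsstF M π p k s + π (k+1) * fsstP M π p (k+1) s := by
      simpa [fsstF] using Finset.sum_Icc_succ_top (by omega : 1 ≤ k + 1)
        (fun j => π j * fsstP M π p j s)
    have hP : fsstP M π p (k+1) s =
        (if s < k + 1 then
          (π s / π (k+1)) * (p k * (1 - HId π k / HId π (k+1)) -
            p (k+1) * (1 - HId π (k+1) / HId π (k+2)))
        else if s = k + 1 then
          1 - p (k+1) * (1 - HId π (k+1) / HId π (k+2)) - p k * (HId π k / HId π (k+1))
        else if s = k + 2 then
          p (k+1) * (HId π (k+1) / HId π (k+2)) * (π (k+2) / π (k+1))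
        else 0) := by
      simp only [fsstP, if_neg (by omega : ¬ k + 1 = 1), if_neg (by omega : ¬ k + 1 = M)]
      norm_num
    rw [hF, ih (by omega) s hs, hP]
    rcases (by omega : s ≤ k ∨ s = k + 1 ∨ s = k + 2 ∨ k + 3 ≤ s) with h | h | h | h
    · rw [if_pos (by omega), if_pos (by omega), if_pos (by omega), if_pos (by omega),
        if_pos (by omega)]
      field_simp
      ring
    · subst h
      rw [if_pos (by omega), if_neg (by omega), if_neg (by omega), if_pos rfl,
        if_pos (by omega), if_pos (by omega)]
      field_simp
      ring
    · subst h
      rw [if_neg (by omega), if_neg (by omega), if_neg (by omega), if_neg (by omega),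
        if_pos rfl, if_pos (by omega), if_neg (by omega)]
      field_simp
      ring
    · rw [if_neg (by omega), if_neg (by omega), if_neg (by omega), if_neg (by omega),
        if_neg (by omega), if_neg (by omega), if_neg (by omega)]
      ring

lemma Icc_one_prod {β : Type*} [CommMonoid β] (f : ℕ → β) (n : ℕ) :
    ∏ j ∈ Finset.Icc 1 n, f j = ∏ j ∈ Finset.range n, f (j + 1) := by
  rw [← Finset.Ico_add_one_right_eq_Icc, Finset.prod_Ico_eq_prod_range]
  simp [add_comm]

lemma Icc_one_sum (f : ℕ → ℝ) (n : ℕ) :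
    ∑ j ∈ Finset.Icc 1 n, f j = ∑ j ∈ Finset.range n, f (j + 1) := by
  rw [← Finset.Ico_add_one_right_eq_Icc, Finset.sum_Ico_eq_sum_range]
  simp [add_comm]

lemma sum_fin_eq_Icc {M : ℕ} (f : ℕ → ℝ) :
    ∑ s : Fin M, f ((s : ℕ) + 1) = ∑ s ∈ Finset.Icc 1 M, f s := by
  rw [Icc_one_sum, ← Fin.sum_univ_eq_sum_range (fun i => f (i + 1)) M]

lemma sum_ite_ge (f : ℕ → ℝ) (m M : ℕ) :
    ∑ i ∈ Finset.range M, (if m ≤ i then f i else 0) = ∑ i ∈ Finset.Ico m M, f i := by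
  rw [← Finset.sum_subset (fun x hx => Finset.mem_range.mpr (Finset.mem_Ico.mp hx).2)
    (fun x hx hnx =>
      if_neg (fun hmx => hnx (Finset.mem_Ico.mpr ⟨hmx, Finset.mem_range.mp hx⟩)))]
  exact Finset.sum_congr rfl fun x hx => by
    simp only [Finset.mem_Ico] at hx; rw [if_pos hx.1]

lemma fsstF_M {M : ℕ} (hM : 2 ≤ M) {π : ℕ → ℝ} (p : ℕ → ℝ)
    (hπpos : ∀ k, 1 ≤ k → k ≤ M → 0 < π k)
    (hπsum : ∑ k ∈ Finset.Icc 1 M, π k = 1) :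
    ∀ s, 1 ≤ s → s ≤ M → fsstF M π p M s = π s := by
  intro s hs1 hs2
  have hHM : HId π M = 1 := hπsum
  have hrec : HId π M = HId π (M - 1) + π M := by
    have := HId_succ π (M - 1)
    rwa [show M - 1 + 1 = M by omega] at this
  have hHm1 : HId π (M - 1) = 1 - π M := by rw [← hHM, hrec]; ring
  have hsplit : fsstF M π p M s = fsstF M π p (M - 1) s + π M * fsstP M π p M s := by
    have h := Finset.sum_Icc_succ_top (by omega : 1 ≤ (M - 1) + 1)
      (fun j => π j * fsstP M π p j s)
    rw [show M - 1 + 1 = M by omega] at h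
    simpa [fsstF] using h
  rw [hsplit, fsstF_eq hM p hπpos (M - 1) (by omega) le_rfl s hs1,
    show M - 1 + 1 = M by omega, hHM, div_one]
  rcases (by omega : s ≤ M - 1 ∨ s = M) with h | h
  · have hv : fsstP M π p M s = p (M - 1) * π s := by
      rw [fsstP, if_neg (by omega), if_pos rfl, if_pos h]
    rw [hv, if_pos hs2, if_pos h]
    linear_combination (π s * p (M - 1)) * hHm1
  · rw [h]
    have hv : fsstP M π p M M = 1 - p (M - 1) + p (M - 1) * π M := by
      rw [fsstP, if_neg (by omega), if_pos rfl, if_neg (by omega), if_pos rfl]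
    rw [hv, if_pos le_rfl, if_neg (by omega)]
    linear_combination (π M * p (M - 1)) * hHm1

lemma sumF {M : ℕ} (hM : 2 ≤ M) {π : ℕ → ℝ} (p : ℕ → ℝ)
    (hπpos : ∀ k, 1 ≤ k → k ≤ M → 0 < π k)
    (hπsum : ∑ k ∈ Finset.Icc 1 M, π k = 1) :
    ∀ k, 1 ≤ k → k ≤ M → ∑ s ∈ Finset.Icc 1 M, fsstF M π p k s = HId π k := by
  intro k hk1 hk2
  rcases (by omega : k ≤ M - 1 ∨ k = M) with h | h
  · have hHk1 : (0:ℝ) < HId π (k + 1) := HId_pos hπpos (by omega) (by omega)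
    have hstep : ∀ s ∈ Finset.Icc 1 M, fsstF M π p k s =
        (if s ≤ k + 1 then π s * (p k * (HId π k / HId π (k + 1))) else 0)
          + (if s ≤ k then π s * (1 - p k) else 0) := by
      intro s hs
      rw [fsstF_eq hM p hπpos k hk1 h s (Finset.mem_Icc.mp hs).1]
      split_ifs <;> ring
    rw [Finset.sum_congr rfl hstep, Finset.sum_add_distrib,
      sum_ite_le _ (by omega : k + 1 ≤ M), sum_ite_le _ (by omega : k ≤ M),
      ← Finset.sum_mul, ← Finset.sum_mul]
    have e1 : ∑ s ∈ Finset.Icc 1 (k + 1), π s = HId π (k + 1) := rfl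
    have e2 : ∑ s ∈ Finset.Icc 1 k, π s = HId π k := rfl
    rw [e1, e2]
    field_simp
    ring
  · rw [h]
    have hv : ∀ s ∈ Finset.Icc 1 M, fsstF M π p M s = π s := fun s hs => by
      have := Finset.mem_Icc.mp hs
      exact fsstF_M hM p hπpos hπsum s this.1 this.2
    rw [Finset.sum_congr rfl hv]
    rfl

lemma fsstP_rowsum {M : ℕ} (hM : 2 ≤ M) {π : ℕ → ℝ} (p : ℕ → ℝ)
    (hπpos : ∀ k, 1 ≤ k → k ≤ M → 0 < π k)
    (hπsum : ∑ k ∈ Finset.Icc 1 M, π k = 1) :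
    ∀ k, 1 ≤ k → k ≤ M → ∑ s ∈ Finset.Icc 1 M, fsstP M π p k s = 1 := by
  intro k hk1 hk2
  have hπk : (0:ℝ) < π k := hπpos k hk1 hk2
  rcases (by omega : k = 1 ∨ 2 ≤ k) with h | h
  · subst h
    have hmul : π 1 * ∑ s ∈ Finset.Icc 1 M, fsstP M π p 1 s = π 1 := by
      rw [Finset.mul_sum]
      have : ∀ s ∈ Finset.Icc 1 M, π 1 * fsstP M π p 1 s = fsstF M π p 1 s := fun s _ => by
        simp [fsstF]
      rw [Finset.sum_congr rfl this, sumF hM p hπpos hπsum 1 le_rfl (by omega), HId_one]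
    have := mul_left_cancel₀ (ne_of_gt hπk) (hmul.trans (mul_one (π 1)).symm)
    exact this
  · have hdiff : ∀ s, π k * fsstP M π p k s = fsstF M π p k s - fsstF M π p (k - 1) s := by
      intro s
      have hh := Finset.sum_Icc_succ_top (by omega : 1 ≤ (k - 1) + 1)
        (fun j => π j * fsstP M π p j s)
      rw [show k - 1 + 1 = k by omega] at hh
      simp only [fsstF] at hh ⊢
      rw [hh]
      ring
    have hrec : HId π k = HId π (k - 1) + π k := by
      have := HId_succ π (k - 1)
      rwa [show k - 1 + 1 = k by omega] at this
    have hmul : π k * ∑ s ∈ Finset.Icc 1 M, fsstP M π p k s = π k := by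
      rw [Finset.mul_sum, Finset.sum_congr rfl (fun s _ => hdiff s), Finset.sum_sub_distrib,
        sumF hM p hπpos hπsum k (by omega) hk2, sumF hM p hπpos hπsum (k - 1) (by omega) (by omega)]
      linarith [hrec]
    exact mul_left_cancel₀ (ne_of_gt hπk) (hmul.trans (mul_one (π k)).symm)

lemma linkMul_apply {M : ℕ} (π p : ℕ → ℝ) (k s : Fin M) :
    (fsstLink M π * fsstMat M π p) k s =
      fsstF M π p ((k : ℕ) + 1) ((s : ℕ) + 1) / HId π ((k : ℕ) + 1) := by
  rw [Matrix.mul_apply]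
  have h0 : ∑ j : Fin M, fsstLink M π k j * fsstMat M π p j s =
      ∑ j ∈ Finset.range M, (fun j => (if j ≤ (k : ℕ) then π (j + 1) / HId π ((k : ℕ) + 1)
        else 0) * fsstP M π p (j + 1) ((s : ℕ) + 1)) j := by
    rw [← Fin.sum_univ_eq_sum_range]
    rfl
  rw [h0, ← Finset.sum_subset
    (Finset.range_subset_range.mpr (by omega : (k : ℕ) + 1 ≤ M))
    (fun x hx hnx => by
      rw [if_neg (fun hle => hnx (Finset.mem_range.mpr (by omega))), zero_mul])]
  rw [Finset.sum_congr rfl (fun x hx => by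
    rw [if_pos (by have := Finset.mem_range.mp hx; omega)])]
  rw [fsstF, Icc_one_sum, Finset.sum_div]
  exact Finset.sum_congr rfl fun x _ => by ring

lemma pureBirthMul_last {M : ℕ} (π p : ℕ → ℝ) (k s : Fin M) (hlast : (k : ℕ) + 1 = M) :
    (pureBirth M p * fsstLink M π) k s = fsstLink M π k s := by
  rw [Matrix.mul_apply]
  have h0 : ∀ j : Fin M, pureBirth M p k j = if j = k then 1 else 0 := by
    intro j
    unfold pureBirth
    rw [if_neg (by have := j.isLt; omega)]
    by_cases h : j = k
    · rw [if_pos h, if_pos hlast, if_pos h]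
    · rw [if_neg h, if_neg h]
  rw [Finset.sum_congr rfl (fun j _ => by rw [h0 j, ite_mul, one_mul, zero_mul])]
  exact Finset.sum_ite_eq' Finset.univ k _ |>.trans (if_pos (Finset.mem_univ k))

lemma pureBirthMul_not_last {M : ℕ} (π p : ℕ → ℝ) (k s : Fin M) (hlt : (k : ℕ) + 1 < M) :
    (pureBirth M p * fsstLink M π) k s =
      p ((k : ℕ) + 1) * fsstLink M π ⟨(k : ℕ) + 1, hlt⟩ s
        + (1 - p ((k : ℕ) + 1)) * fsstLink M π k s := by
  rw [Matrix.mul_apply]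
  set k1 : Fin M := ⟨(k : ℕ) + 1, hlt⟩ with hk1
  have hne : k1 ≠ k := by
    refine Fin.ne_of_val_ne ?_
    simp [hk1]
  have h0 : ∀ j : Fin M, pureBirth M p k j =
      (if j = k1 then p ((k : ℕ) + 1) else 0) + (if j = k then 1 - p ((k : ℕ) + 1) else 0) := by
    intro j
    unfold pureBirth
    by_cases h1 : j = k1
    · subst h1
      rw [if_pos (by simp [hk1]), if_pos rfl, if_neg hne, add_zero]
    · by_cases h2 : j = k
      · subst h2
        rw [if_neg (by omega), if_pos rfl, if_neg (by omega), if_neg h1, if_pos rfl, zero_add]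
      · rw [if_neg (fun hv => h1 (Fin.ext (by simp [hk1, hv]))), if_neg h2, if_neg h1,
          if_neg h2, add_zero]
  have hc : ∀ j ∈ Finset.univ, pureBirth M p k j * fsstLink M π j s =
      (if j = k1 then p ((k : ℕ) + 1) * fsstLink M π j s else 0)
        + (if j = k then (1 - p ((k : ℕ) + 1)) * fsstLink M π j s else 0) := by
    intro j _
    rw [h0 j]
    split_ifs <;> ring
  rw [Finset.sum_congr rfl hc, Finset.sum_add_distrib,
    Finset.sum_ite_eq' Finset.univ k1 _, Finset.sum_ite_eq' Finset.univ k _,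
    if_pos (Finset.mem_univ _), if_pos (Finset.mem_univ _)]

lemma intertwine_s15 {M : ℕ} (hM : 2 ≤ M) {π : ℕ → ℝ} (p : ℕ → ℝ)
    (hπpos : ∀ k, 1 ≤ k → k ≤ M → 0 < π k)
    (hπsum : ∑ k ∈ Finset.Icc 1 M, π k = 1) :
    fsstLink M π * fsstMat M π p = pureBirth M p * fsstLink M π := by
  ext k s
  rw [linkMul_apply]
  have hHM : HId π M = 1 := hπsum
  rcases (by omega : (k : ℕ) + 1 = M ∨ (k : ℕ) + 1 < M) with hlast | hlt
  · rw [pureBirthMul_last π p k s hlast, hlast,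
      fsstF_M hM p hπpos hπsum ((s : ℕ) + 1) (by omega) (by have := s.isLt; omega),
      hHM, div_one]
    unfold fsstLink
    rw [if_pos (by have := s.isLt; omega), hlast, hHM, div_one]
  · rw [pureBirthMul_not_last π p k s hlt,
      fsstF_eq hM p hπpos ((k : ℕ) + 1) (by omega) (by omega) ((s : ℕ) + 1) (by omega)]
    unfold fsstLink
    have hHk1 : (0:ℝ) < HId π ((k : ℕ) + 1) := HId_pos hπpos (by omega) (by omega)
    have hHk2 : (0:ℝ) < HId π ((k : ℕ) + 2) := HId_pos hπpos (by omega) (by omega)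
    simp only []
    rcases (by omega : (s : ℕ) ≤ (k : ℕ) ∨ (s : ℕ) = (k : ℕ) + 1 ∨ (k : ℕ) + 1 < (s : ℕ))
      with h | h | h
    · rw [if_pos (by omega), if_pos (by omega), if_pos (show (s:ℕ) ≤ (k:ℕ)+1 by omega),
        if_pos h]
      field_simp
    · rw [if_pos (by omega), if_neg (by omega), if_pos (show (s:ℕ) ≤ (k:ℕ)+1 by omega),
        if_neg (by omega)]
      field_simp
      ring
    · rw [if_neg (by omega), if_neg (by omega), if_neg (by omega), if_neg (by omega)]
      ring

lemma charpoly_eq_of_comm {n : Type*} [Fintype n] [DecidableEq n]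
    (L P Q : Matrix n n ℝ) (h : L * P = Q * L) (hd : L.det ≠ 0) :
    P.charpoly = Q.charpoly := by
  have key : (L.map C) * charmatrix P = charmatrix Q * (L.map C) := by
    unfold charmatrix
    rw [Matrix.mul_sub, Matrix.sub_mul]
    congr 1
    · exact (Matrix.scalar_commute (X : ℝ[X]) (fun r => Commute.all _ _) (L.map C)).symm
    · rw [RingHom.mapMatrix_apply, RingHom.mapMatrix_apply, ← Matrix.map_mul, h, Matrix.map_mul]
  have hdet : (L.map C).det ≠ 0 := by
    rw [← RingHom.mapMatrix_apply, ← RingHom.map_det]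
    exact fun hc => hd (by simpa using hc)
  have hkey := congrArg Matrix.det key
  rw [Matrix.det_mul, Matrix.det_mul, mul_comm ((charmatrix Q).det)] at hkey
  exact mul_left_cancel₀ hdet hkey

lemma link_det_ne_zero {M : ℕ} {π : ℕ → ℝ}
    (hπpos : ∀ k, 1 ≤ k → k ≤ M → 0 < π k) : (fsstLink M π).det ≠ 0 := by
  have htri : (fsstLink M π).BlockTriangular OrderDual.toDual := by
    intro i j hij
    exact if_neg (by simpa using hij)
  rw [Matrix.det_of_lowerTriangular _ htri]
  refine ne_of_gt (Finset.prod_pos fun i _ => ?_)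
  have hi := i.isLt
  rw [fsstLink, if_pos le_rfl]
  exact div_pos (hπpos _ (by omega) (by omega)) (HId_pos hπpos (by omega) (by omega))

lemma pureBirth_charpoly {M : ℕ} (hM : 2 ≤ M) (p : ℕ → ℝ) :
    (pureBirth M p).charpoly =
      (Polynomial.X - 1) *
        ∏ k ∈ Finset.Icc 1 (M - 1), (Polynomial.X - Polynomial.C (1 - p k)) := by
  have htri : (pureBirth M p).BlockTriangular id := by
    intro i j hij
    simp only [id] at hij
    unfold pureBirth
    rw [if_neg (by omega), if_neg (Fin.ne_of_val_ne (by omega))]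
  rw [Matrix.charpoly_of_upperTriangular _ htri]
  have hdiag : ∀ i : Fin M, (X - C (pureBirth M p i i)) =
      (fun i : ℕ => X - C (if i + 1 = M then 1 else 1 - p (i + 1))) (i : ℕ) := by
    intro i
    congr 1
    unfold pureBirth
    rw [if_neg (by omega), if_pos rfl]
  rw [Finset.prod_congr rfl (fun i _ => hdiag i),
    Fin.prod_univ_eq_prod_range (fun i => X - C (if i + 1 = M then 1 else 1 - p (i + 1))) M]
  have hsplit : ∏ i ∈ Finset.range M, (X - C (if i + 1 = M then (1:ℝ) else 1 - p (i + 1))) =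
      (∏ i ∈ Finset.range (M - 1), (X - C (if i + 1 = M then (1:ℝ) else 1 - p (i + 1))))
        * (X - C (if (M - 1) + 1 = M then (1:ℝ) else 1 - p ((M - 1) + 1))) := by
    rw [← Finset.prod_range_succ, show M - 1 + 1 = M by omega]
  rw [hsplit, if_pos (by omega), Polynomial.C_1,
    Finset.prod_congr rfl (fun i hi => by
      rw [if_neg (by have := Finset.mem_range.mp hi; omega)]),
    ← Icc_one_prod (fun i => X - C (1 - p i)) (M - 1)]
  ring

theorem stmt15 (M : ℕ) (hM : 2 ≤ M) (π : ℕ → ℝ)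
    (hπpos : ∀ k, 1 ≤ k → k ≤ M → 0 < π k)
    (hπsum : ∑ k ∈ Finset.Icc 1 M, π k = 1)
    (a : ℕ → ℝ) (hann : ∀ k, 1 ≤ k → k ≤ M → 0 ≤ a k)
    (hasum : ∑ k ∈ Finset.Icc 1 M, a k = 1)
    (p : ℕ → ℝ) (hp : ∀ k, 1 ≤ k → k ≤ M - 1 → 0 ≤ p k ∧ p k ≤ 1)
    (hnn : ∀ k s, 0 ≤ fsstMat M π p k s) :
    (∀ k, ∑ s, fsstMat M π p k s = 1) ∧
    ((fun k : Fin M => π ((k : ℕ) + 1)) ᵥ* fsstMat M π p =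
      fun k : Fin M => π ((k : ℕ) + 1)) ∧
    fsstLink M π * fsstMat M π p = pureBirth M p * fsstLink M π ∧
    (∀ k : Fin M, ((fun i : Fin M => a ((i : ℕ) + 1)) ᵥ* fsstLink M π) k =
      π ((k : ℕ) + 1) * ∑ i ∈ Finset.Icc ((k : ℕ) + 1) M, a i / HId π i) ∧
    (∀ k : Fin M, 0 ≤ ((fun i : Fin M => a ((i : ℕ) + 1)) ᵥ* fsstLink M π) k) ∧
    (∑ k : Fin M, ((fun i : Fin M => a ((i : ℕ) + 1)) ᵥ* fsstLink M π) k = 1) ∧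
    (fsstMat M π p).charpoly =
      (Polynomial.X - 1) *
        ∏ k ∈ Finset.Icc 1 (M - 1), (Polynomial.X - Polynomial.C (1 - p k)) := by
  -- part (d1)
  have hd1 : ∀ k : Fin M, ((fun i : Fin M => a ((i : ℕ) + 1)) ᵥ* fsstLink M π) k =
      π ((k : ℕ) + 1) * ∑ i ∈ Finset.Icc ((k : ℕ) + 1) M, a i / HId π i := by
    intro k
    have h0 : ((fun i : Fin M => a ((i : ℕ) + 1)) ᵥ* fsstLink M π) k =
        ∑ i ∈ Finset.range M, (fun i => a (i + 1) *
          (if (k : ℕ) ≤ i then π ((k : ℕ) + 1) / HId π (i + 1) else 0)) i := by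
      rw [← Fin.sum_univ_eq_sum_range]
      rfl
    rw [h0]
    simp only [mul_ite, mul_zero]
    rw [sum_ite_ge,
      ← Finset.Ico_add_one_right_eq_Icc, Finset.sum_Ico_eq_sum_range, Finset.sum_Ico_eq_sum_range,
      show M + 1 - ((k : ℕ) + 1) = M - (k : ℕ) by omega, Finset.mul_sum]
    refine Finset.sum_congr rfl fun i _ => ?_
    rw [show (k : ℕ) + 1 + i = (k : ℕ) + i + 1 by omega]
    ring
  refine ⟨?_, ?_, intertwine_s15 hM p hπpos hπsum, hd1, ?_, ?_, ?_⟩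
  -- (a) row sums
  · intro k
    have hconv : ∑ s : Fin M, fsstMat M π p k s =
        ∑ s ∈ Finset.Icc 1 M, fsstP M π p ((k : ℕ) + 1) s :=
      sum_fin_eq_Icc (fun j => fsstP M π p ((k : ℕ) + 1) j)
    rw [hconv]
    exact fsstP_rowsum hM p hπpos hπsum ((k : ℕ) + 1) (by omega) (by have := k.isLt; omega)
  -- (b) invariance
  · funext s
    have h0 : ((fun k : Fin M => π ((k : ℕ) + 1)) ᵥ* fsstMat M π p) s =
        ∑ i : Fin M, (fun j => π j * fsstP M π p j ((s : ℕ) + 1)) ((i : ℕ) + 1) := rfl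
    rw [h0, sum_fin_eq_Icc (fun j => π j * fsstP M π p j ((s : ℕ) + 1))]
    exact fsstF_M hM p hπpos hπsum ((s : ℕ) + 1) (by omega) (by have := s.isLt; omega)
  -- (d2) nonneg
  · intro k
    rw [hd1 k]
    refine mul_nonneg (le_of_lt (hπpos _ (by omega) (by have := k.isLt; omega))) ?_
    refine Finset.sum_nonneg fun i hi => ?_
    have hmem := Finset.mem_Icc.mp hi
    exact div_nonneg (hann i (by omega) hmem.2)
      (le_of_lt (HId_pos hπpos (by omega) hmem.2))
  -- (d3) sums to one
  · have h0 : ∀ k : Fin M, ((fun i : Fin M => a ((i : ℕ) + 1)) ᵥ* fsstLink M π) k =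
        ∑ i : Fin M, a ((i : ℕ) + 1) * fsstLink M π i k := fun k => rfl
    rw [Finset.sum_congr rfl (fun k _ => h0 k), Finset.sum_comm]
    have hrow : ∀ i : Fin M, ∑ k : Fin M, a ((i : ℕ) + 1) * fsstLink M π i k
        = a ((i : ℕ) + 1) := by
      intro i
      rw [← Finset.mul_sum]
      have hsum1 : ∑ k : Fin M, fsstLink M π i k = 1 := by
        have hconv : ∑ k : Fin M, fsstLink M π i k = ∑ j ∈ Finset.range M,
            (fun j => if j ≤ (i : ℕ) then π (j + 1) / HId π ((i : ℕ) + 1) else 0) j := by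
          rw [← Fin.sum_univ_eq_sum_range]
          rfl
        rw [hconv, ← Finset.sum_subset
          (Finset.range_subset_range.mpr (by have := i.isLt; omega : (i : ℕ) + 1 ≤ M))
          (fun x hx hnx => if_neg (fun hle => hnx (Finset.mem_range.mpr (by omega)))),
          Finset.sum_congr rfl (fun x hx =>
            if_pos (by have := Finset.mem_range.mp hx; omega)),
          ← Finset.sum_div, ← Icc_one_sum π ((i : ℕ) + 1)]
        exact div_self (ne_of_gt (HId_pos hπpos (by omega) (by have := i.isLt; omega)))
      rw [hsum1, mul_one]
    rw [Finset.sum_congr rfl (fun i _ => hrow i), sum_fin_eq_Icc a]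
    exact hasum
  -- (e) charpoly
  · rw [charpoly_eq_of_comm (fsstLink M π) (fsstMat M π p) (pureBirth M p)
      (intertwine_s15 hM p hπpos hπsum) (link_det_ne_zero hπpos)]
    exact pureBirth_charpoly hM p
end

section
/- In the setting of the prescribed-FSST construction — M ≥ 2, π a positive probability vector on {1,…,M} with H(k) := Σ_{j=1}^k π(j), a a probability vector, p_1,…,p_{M−1} ∈ (0,1], P the matrix defined by the piecewise formulas of that construction with all entries nonnegative, and ν(k) := π(k)·Σ_{i=k}^M a_i/H(i) — assume additionally that P is irreducible and aperiodic (some power of P has all entries positive). Then the fastest strong stationary time identity holds: for every integer n ≥ 0, sep(ν Pⁿ, π) = 1 − (a (P*)ⁿ)(M), where P* is the pure-birth chain with parameters p_1,…,p_{M−1}; the right-hand side is the tail probability P(T > n) of the mixture Σ_{i=1}^{M−1} a_i · G(p_i, p_{i+1}, …, p_{M−1}) of sums of independent geometric random variables (the absorption time of P* started from a). -/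
open Matrix Finset

/-- Separation, with an explicit nonemptiness witness. -/
noncomputable def sep' {E : Type*} [Fintype E] (h : (Finset.univ : Finset E).Nonempty)
    (μ π : E → ℝ) : ℝ :=
  Finset.univ.sup' h fun e => 1 - μ e / π e


namespace Stmt16aux

lemma HId_succ (π : ℕ → ℝ) (n : ℕ) : HId π (n+1) = HId π n + π (n+1) := by
  unfold HId
  rw [← Finset.sum_Icc_succ_top (by omega : 1 ≤ n+1)]

lemma HId_one (π : ℕ → ℝ) : HId π 1 = π 1 := by simp [HId]

lemma HId_pos {M : ℕ} {π : ℕ → ℝ} (hπpos : ∀ k, 1 ≤ k → k ≤ M → 0 < π k) :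
    ∀ k, 1 ≤ k → k ≤ M → 0 < HId π k := by
  intro k hk1 hkM
  unfold HId
  apply Finset.sum_pos
  · intro j hj
    rw [Finset.mem_Icc] at hj
    exact hπpos j hj.1 (le_trans hj.2 hkM)
  · exact ⟨1, Finset.mem_Icc.mpr ⟨le_refl 1, hk1⟩⟩

lemma one_sub_div {π : ℕ → ℝ} {j : ℕ} (h : HId π (j+1) ≠ 0) :
    1 - HId π j / HId π (j+1) = π (j+1) / HId π (j+1) := by
  rw [HId_succ] at h ⊢; field_simp; ring


lemma fsstP_row1 (M : ℕ) (π p : ℕ → ℝ) (K : ℕ) :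
    fsstP M π p 1 K = if K = 1 then 1 - (π 2 / (π 1 + π 2)) * p 1
      else if K = 2 then (π 2 / (π 1 + π 2)) * p 1 else 0 := by
  unfold fsstP; rw [if_pos rfl]

lemma fsstP_mid {M k : ℕ} (π p : ℕ → ℝ) (h1 : k ≠ 1) (hMk : k ≠ M) (K : ℕ) :
    fsstP M π p k K =
      if K < k then (π K / π k) * (p (k-1) * (1 - HId π (k-1) / HId π k) -
          p k * (1 - HId π k / HId π (k+1)))
      else if K = k then
        1 - p k * (1 - HId π k / HId π (k+1)) - p (k-1) * (HId π (k-1) / HId π k)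
      else if K = k+1 then p k * (HId π k / HId π (k+1)) * (π (k+1) / π k)
      else 0 := by
  unfold fsstP; rw [if_neg h1, if_neg hMk]

lemma fsstP_rowM {M : ℕ} (π p : ℕ → ℝ) (hM1 : M ≠ 1) (K : ℕ) :
    fsstP M π p M K = if K ≤ M - 1 then p (M-1) * π K
      else if K = M then 1 - p (M-1) + p (M-1) * π M else 0 := by
  unfold fsstP; rw [if_neg hM1, if_pos rfl]

noncomputable def E (π p : ℕ → ℝ) (j : ℕ) : ℝ := p j * π (j+1) / HId π (j+1)

lemma keyS {M : ℕ} {π p : ℕ → ℝ} (hM : 2 ≤ M)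
    (hπpos : ∀ k, 1 ≤ k → k ≤ M → 0 < π k) :
    ∀ I, 1 ≤ I → I < M → ∀ K, 1 ≤ K →
    ∑ j ∈ Icc 1 I, π j * fsstP M π p j K =
      if K ≤ I then π K * (1 - E π p I)
      else if K = I + 1 then p I * HId π I / HId π (I+1) * π (I+1)
      else 0 := by
  intro I hI1
  induction I, hI1 using Nat.le_induction with
  | base =>
    intro _ K hK1
    rw [Finset.Icc_self, Finset.sum_singleton, fsstP_row1]
    have hH2 : HId π 2 ≠ 0 := (HId_pos hπpos 2 (by omega) hM).ne'
    have hpi12 : π 1 + π 2 = HId π 2 := by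
      rw [show (2:ℕ) = 1 + 1 from rfl, HId_succ, HId_one]
    have hE : E π p 1 = p 1 * π 2 / HId π 2 := rfl
    rcases eq_or_ne K 1 with h1 | h1
    · subst h1
      rw [if_pos rfl, if_pos (le_refl 1), hpi12, hE]
      ring
    · rcases eq_or_ne K 2 with h2 | h2
      · subst h2
        rw [if_neg h1, if_pos rfl, if_neg (by omega : ¬ (2:ℕ) ≤ 1),
          if_pos rfl, hpi12, HId_one]
        ring
      · rw [if_neg h1, if_neg h2, if_neg (by omega : ¬ K ≤ 1), if_neg (by omega : K ≠ 1 + 1)]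
        ring
  | succ n hn ih =>
    intro hnM K hK1
    rw [Finset.sum_Icc_succ_top (by omega : 1 ≤ n+1), ih (by omega) K hK1,
      fsstP_mid π p (by omega : n+1 ≠ 1) (by omega : n+1 ≠ M)]
    simp only [Nat.add_sub_cancel]
    have hπn1 : π (n+1) ≠ 0 := (hπpos (n+1) (by omega) (by omega)).ne'
    have hHn : HId π n ≠ 0 := (HId_pos hπpos n hn (by omega)).ne'
    have hHn1 : HId π (n+1) ≠ 0 := (HId_pos hπpos (n+1) (by omega) (by omega)).ne'
    have hHn2 : HId π (n+1+1) ≠ 0 := (HId_pos hπpos (n+1+1) (by omega) (by omega)).ne'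
    rw [one_sub_div hHn2, one_sub_div hHn1]
    have hE1 : E π p n = p n * π (n+1) / HId π (n+1) := rfl
    have hE2 : E π p (n+1) = p (n+1) * π (n+1+1) / HId π (n+1+1) := rfl
    rcases lt_or_ge K (n+1) with hKlt | hKge
    · rw [if_pos (by omega : K ≤ n), if_pos hKlt, if_pos (by omega : K ≤ n+1), hE1, hE2]
      field_simp
      ring
    · rcases eq_or_lt_of_le hKge with hKeq | hKgt
      · rw [← hKeq] at *
        rw [if_neg (by omega : ¬ n+1 ≤ n), if_pos rfl, if_neg (by omega : ¬ n+1 < n+1),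
          if_pos rfl, if_pos (le_refl (n+1)), hE2]
        field_simp
        ring
      · rcases eq_or_ne K (n+1+1) with h2 | h2
        · subst h2
          rw [if_neg (by omega : ¬ n+1+1 ≤ n), if_neg (by omega : n+1+1 ≠ n+1),
            if_neg (by omega : ¬ n+1+1 < n+1), if_neg (by omega : n+1+1 ≠ n+1),
            if_pos rfl, if_neg (by omega : ¬ n+1+1 ≤ n+1), if_pos rfl]
          field_simp
          ring
        · rw [if_neg (by omega : ¬ K ≤ n), if_neg (by omega : K ≠ n+1),
            if_neg (by omega : ¬ K < n+1), if_neg (by omega : K ≠ n+1),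
            if_neg h2, if_neg (by omega : ¬ K ≤ n+1), if_neg h2]
          ring

lemma keyS_M {M : ℕ} {π p : ℕ → ℝ} (hM : 2 ≤ M)
    (hπpos : ∀ k, 1 ≤ k → k ≤ M → 0 < π k)
    (hπsum : ∑ k ∈ Finset.Icc 1 M, π k = 1) :
    ∀ K, 1 ≤ K → K ≤ M → ∑ j ∈ Icc 1 M, π j * fsstP M π p j K = π K := by
  intro K hK1 hKM
  obtain ⟨m, rfl⟩ : ∃ m, M = m + 1 := ⟨M-1, by omega⟩
  have hm1 : 1 ≤ m := by omega
  have hHM : HId π (m+1) = 1 := hπsum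
  have hHm : HId π m = 1 - π (m+1) := by
    have h := HId_succ π m; rw [hHM] at h; linarith
  rw [Finset.sum_Icc_succ_top (by omega : 1 ≤ m+1),
    keyS hM hπpos m hm1 (by omega) K hK1,
    fsstP_rowM π p (by omega : m+1 ≠ 1) K]
  simp only [Nat.add_sub_cancel]
  have hE : E π p m = p m * π (m+1) / HId π (m+1) := rfl
  rcases le_or_gt K m with hKm | hKm
  · rw [if_pos hKm, if_pos hKm, hE, hHM, div_one]
    ring
  · have : K = m+1 := by omega
    subst this
    rw [if_neg (by omega : ¬ m+1 ≤ m), if_pos rfl, if_neg (by omega : ¬ m+1 ≤ m),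
      if_pos rfl, hHM, hHm, div_one]
    ring

noncomputable def Lam (M : ℕ) (π : ℕ → ℝ) : Matrix (Fin M) (Fin M) ℝ :=
  fun i k => if (k:ℕ) ≤ (i:ℕ) then π ((k:ℕ)+1) / HId π ((i:ℕ)+1) else 0

lemma sum_fin_head {M : ℕ} (i : Fin M) (g : ℕ → ℝ) :
    ∑ j : Fin M, (if (j:ℕ) ≤ (i:ℕ) then g ((j:ℕ)+1) else 0)
      = ∑ j ∈ Icc 1 ((i:ℕ)+1), g j := by
  rw [Fin.sum_univ_eq_sum_range (fun j => if j ≤ (i:ℕ) then g (j+1) else 0) M,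
    ← Finset.sum_filter]
  have h1 : (Finset.range M).filter (fun j => j ≤ (i:ℕ)) = Finset.range ((i:ℕ)+1) := by
    ext x
    simp only [Finset.mem_filter, Finset.mem_range]
    have := i.isLt
    omega
  rw [h1, ← Finset.Ico_add_one_right_eq_Icc, Finset.sum_Ico_eq_sum_range]
  have h3 : (i:ℕ)+1+1-1 = (i:ℕ)+1 := by omega
  rw [h3]
  exact Finset.sum_congr rfl fun j _ => by rw [Nat.add_comm]

lemma sum_fin_tail {M : ℕ} (k : Fin M) (g : ℕ → ℝ) :
    ∑ i : Fin M, (if (k:ℕ) ≤ (i:ℕ) then g ((i:ℕ)+1) else 0)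
      = ∑ i ∈ Icc ((k:ℕ)+1) M, g i := by
  rw [Fin.sum_univ_eq_sum_range (fun i => if (k:ℕ) ≤ i then g (i+1) else 0) M,
    ← Finset.sum_filter]
  have h1 : (Finset.range M).filter (fun i => (k:ℕ) ≤ i) = Finset.Ico (k:ℕ) M := by
    ext x
    simp only [Finset.mem_filter, Finset.mem_range, Finset.mem_Ico]
    omega
  rw [h1, Finset.sum_Ico_eq_sum_range, ← Finset.Ico_add_one_right_eq_Icc, Finset.sum_Ico_eq_sum_range]
  have hk := k.isLt
  have h2 : M + 1 - ((k:ℕ)+1) = M - (k:ℕ) := by omega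
  rw [h2]
  exact Finset.sum_congr rfl fun j _ => by congr 1; omega

lemma intertwine {M : ℕ} {π p : ℕ → ℝ} (hM : 2 ≤ M)
    (hπpos : ∀ k, 1 ≤ k → k ≤ M → 0 < π k)
    (hπsum : ∑ k ∈ Finset.Icc 1 M, π k = 1) :
    Lam M π * fsstMat M π p = pureBirth M p * Lam M π := by
  ext i k
  rw [Matrix.mul_apply, Matrix.mul_apply]
  have hik := i.isLt
  have hkk := k.isLt
  have hL : ∀ j : Fin M, Lam M π i j * fsstMat M π p j k =
      (if (j:ℕ) ≤ (i:ℕ) then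
        π ((j:ℕ)+1) * fsstP M π p ((j:ℕ)+1) ((k:ℕ)+1) / HId π ((i:ℕ)+1) else 0) := by
    intro j
    unfold Lam fsstMat
    split_ifs <;> ring
  rw [Finset.sum_congr rfl fun j _ => hL j,
    sum_fin_head i (fun t => π t * fsstP M π p t ((k:ℕ)+1) / HId π ((i:ℕ)+1)),
    ← Finset.sum_div]
  have hHi1 : HId π ((i:ℕ)+1) ≠ 0 := (HId_pos hπpos _ (by omega) (by omega)).ne'
  rcases eq_or_ne ((i:ℕ)+1) M with hiM | hiM
  · -- last row of the pure-birth chain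
    have hR : ∀ j : Fin M, pureBirth M p i j * Lam M π j k =
        (if j = i then Lam M π i k else 0) := by
      intro j
      unfold pureBirth
      rw [if_neg (by have := j.isLt; omega : ¬ (j:ℕ) = (i:ℕ)+1)]
      rcases eq_or_ne j i with rfl | hji
      · rw [if_pos rfl, if_pos rfl, if_pos hiM]; ring
      · rw [if_neg hji, if_neg hji]; ring
    rw [Finset.sum_congr rfl fun j _ => hR j, Finset.sum_ite_eq' Finset.univ i _,
      if_pos (Finset.mem_univ i), hiM,
      keyS_M hM hπpos hπsum ((k:ℕ)+1) (by omega) (by omega)]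
    unfold Lam
    rw [if_pos (by omega : (k:ℕ) ≤ (i:ℕ)), hiM]
  · -- interior rows
    have hi1M : (i:ℕ)+1 < M := by omega
    set i' : Fin M := ⟨(i:ℕ)+1, hi1M⟩ with hi'
    have hii' : i ≠ i' := by
      intro h
      have : (i:ℕ) = (i:ℕ)+1 := congrArg Fin.val h
      omega
    have hR : ∀ j : Fin M, pureBirth M p i j * Lam M π j k =
        (if j = i' then p ((i:ℕ)+1) * Lam M π i' k else 0)
        + (if j = i then (1 - p ((i:ℕ)+1)) * Lam M π i k else 0) := by
      intro j
      unfold pureBirth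
      rcases eq_or_ne j i' with rfl | hji'
      · rw [if_pos (by simp [hi'] : ((i':Fin M):ℕ) = (i:ℕ)+1), if_pos rfl,
          if_neg (Ne.symm hii')]
        ring
      · rw [if_neg (fun h => hji' (Fin.ext (by simpa [hi'] using h))), if_neg hji']
        rcases eq_or_ne j i with rfl | hji
        · rw [if_pos rfl, if_neg hiM, if_pos rfl]; ring
        · rw [if_neg hji, if_neg hji]; ring
    rw [Finset.sum_congr rfl fun j _ => hR j, Finset.sum_add_distrib,
      Finset.sum_ite_eq' Finset.univ i' _, Finset.sum_ite_eq' Finset.univ i _,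
      if_pos (Finset.mem_univ i'), if_pos (Finset.mem_univ i)]
    rw [keyS hM hπpos ((i:ℕ)+1) (by omega) hi1M ((k:ℕ)+1) (by omega)]
    unfold Lam
    simp only [hi', Fin.val_mk]
    have hHi2 : HId π ((i:ℕ)+1+1) ≠ 0 := (HId_pos hπpos _ (by omega) (by omega)).ne'
    have hE : E π p ((i:ℕ)+1) = p ((i:ℕ)+1) * π ((i:ℕ)+1+1) / HId π ((i:ℕ)+1+1) := rfl
    rcases le_or_gt (k:ℕ) (i:ℕ) with hki | hki
    · rw [if_pos (by omega : (k:ℕ)+1 ≤ (i:ℕ)+1), if_pos (by omega : (k:ℕ) ≤ (i:ℕ)+1),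
        if_pos hki, hE]
      rw [HId_succ π ((i:ℕ)+1)]
      have h2 : HId π ((i:ℕ)+1) + π ((i:ℕ)+1+1) ≠ 0 := by
        rw [← HId_succ]; exact hHi2
      field_simp
      ring
    · rcases eq_or_ne (k:ℕ) ((i:ℕ)+1) with hk2 | hk2
      · rw [if_neg (by omega : ¬ (k:ℕ)+1 ≤ (i:ℕ)+1), if_pos (by omega : (k:ℕ)+1 = (i:ℕ)+1+1),
          if_pos (by omega : (k:ℕ) ≤ (i:ℕ)+1), if_neg (by omega : ¬ (k:ℕ) ≤ (i:ℕ)), hk2]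
        field_simp
        ring
      · rw [if_neg (by omega : ¬ (k:ℕ)+1 ≤ (i:ℕ)+1), if_neg (by omega : ¬ (k:ℕ)+1 = (i:ℕ)+1+1),
          if_neg (by omega : ¬ (k:ℕ) ≤ (i:ℕ)+1), if_neg (by omega : ¬ (k:ℕ) ≤ (i:ℕ))]
        simp

end Stmt16aux

open Stmt16aux

/-- The FSST identity for the prescribed-FSST chain: its separation from `π` at
time `n` equals the probability that the pure-birth chain started from `a` has not
yet been absorbed at `M`, i.e. the tail of the prescribed mixture of sums of
geometric random variables. -/
theorem stmt16 (M : ℕ) (hM : 2 ≤ M) (π : ℕ → ℝ)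
    (hπpos : ∀ k, 1 ≤ k → k ≤ M → 0 < π k)
    (hπsum : ∑ k ∈ Finset.Icc 1 M, π k = 1)
    (a : ℕ → ℝ) (hann : ∀ k, 1 ≤ k → k ≤ M → 0 ≤ a k)
    (hasum : ∑ k ∈ Finset.Icc 1 M, a k = 1)
    (p : ℕ → ℝ) (hp : ∀ k, 1 ≤ k → k ≤ M - 1 → 0 < p k ∧ p k ≤ 1)
    (hnn : ∀ k s, 0 ≤ fsstMat M π p k s)
    (hprim : ∃ n, ∀ k s, 0 < ((fsstMat M π p) ^ n) k s) :
    ∀ n : ℕ,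
      sep' (Finset.univ_nonempty_iff.mpr ⟨⟨0, by omega⟩⟩)
        ((fun k : Fin M => π ((k : ℕ) + 1) *
            ∑ i ∈ Finset.Icc ((k : ℕ) + 1) M, a i / HId π i) ᵥ* (fsstMat M π p) ^ n)
        (fun k : Fin M => π ((k : ℕ) + 1)) =
      1 - ((fun i : Fin M => a ((i : ℕ) + 1)) ᵥ* (pureBirth M p) ^ n)
            ⟨M - 1, by omega⟩ := by
  intro n
  have hlt : M - 1 < M := by omega
  have hm : M - 1 + 1 = M := by omega
  have hcomm : ∀ m : ℕ, Lam M π * (fsstMat M π p) ^ m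
      = (pureBirth M p) ^ m * Lam M π := by
    intro m
    induction m with
    | zero => simp
    | succ m ih =>
      rw [pow_succ, pow_succ, ← Matrix.mul_assoc, ih, Matrix.mul_assoc,
        intertwine hM hπpos hπsum, ← Matrix.mul_assoc]
  have hν : (fun k : Fin M => π ((k : ℕ) + 1) *
        ∑ i ∈ Finset.Icc ((k : ℕ) + 1) M, a i / HId π i)
      = (fun i : Fin M => a ((i : ℕ) + 1)) ᵥ* Lam M π := by
    funext k
    simp only [Matrix.vecMul, dotProduct]
    have h1 : ∀ i : Fin M, a ((i:ℕ)+1) * Lam M π i k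
        = π ((k:ℕ)+1) * (if (k:ℕ) ≤ (i:ℕ) then a ((i:ℕ)+1) / HId π ((i:ℕ)+1) else 0) := by
      intro i; unfold Lam; split_ifs <;> ring
    rw [Finset.sum_congr rfl fun i _ => h1 i, ← Finset.mul_sum,
      sum_fin_tail k (fun t => a t / HId π t)]
  rw [hν, Matrix.vecMul_vecMul, hcomm n, ← Matrix.vecMul_vecMul]
  set b := (fun i : Fin M => a ((i : ℕ) + 1)) ᵥ* (pureBirth M p) ^ n with hbdef
  -- nonnegativity of b
  have hQnn : ∀ j i : Fin M, 0 ≤ pureBirth M p j i := by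
    intro j i
    have hj := j.isLt
    have hi := i.isLt
    unfold pureBirth
    split_ifs with h1 h2 h3
    · exact (hp ((j:ℕ)+1) (by omega) (by omega)).1.le
    · norm_num
    · have := (hp ((j:ℕ)+1) (by omega) (by omega)).2
      linarith
    · exact le_refl 0
  have hbnn : ∀ i : Fin M, 0 ≤ b i := by
    rw [hbdef]
    clear hbdef
    induction n with
    | zero =>
      intro i
      rw [pow_zero, Matrix.vecMul_one]
      exact hann _ (by omega) (by have := i.isLt; omega)
    | succ m ih =>
      intro i
      rw [pow_succ, ← Matrix.vecMul_vecMul]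
      simp only [Matrix.vecMul, dotProduct]
      exact Finset.sum_nonneg fun j _ => mul_nonneg (ih j) (hQnn j i)
  -- separation computation
  show _ = 1 - b (⟨M - 1, hlt⟩ : Fin M)
  unfold sep'
  have hS : ∀ k : Fin M, (b ᵥ* Lam M π) k / π ((k:ℕ)+1)
      = ∑ i : Fin M, (if (k:ℕ) ≤ (i:ℕ) then b i / HId π ((i:ℕ)+1) else 0) := by
    intro k
    have hπk : π ((k:ℕ)+1) ≠ 0 := (hπpos _ (by omega) (by have := k.isLt; omega)).ne'
    simp only [Matrix.vecMul, dotProduct]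
    have h1 : ∀ i : Fin M, b i * Lam M π i k
        = π ((k:ℕ)+1) * (if (k:ℕ) ≤ (i:ℕ) then b i / HId π ((i:ℕ)+1) else 0) := by
      intro i; unfold Lam; split_ifs <;> ring
    rw [Finset.sum_congr rfl fun i _ => h1 i, ← Finset.mul_sum, mul_comm,
      mul_div_assoc, div_self hπk, mul_one]
  have hterm : ∀ k i : Fin M, 0 ≤ (if (k:ℕ) ≤ (i:ℕ) then b i / HId π ((i:ℕ)+1) else 0) := by
    intro k i
    split_ifs
    · exact div_nonneg (hbnn i) (HId_pos hπpos _ (by omega) (by have := i.isLt; omega)).le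
    · exact le_refl 0
  have hHlast : HId π (((⟨M - 1, hlt⟩ : Fin M) : ℕ) + 1) = 1 := by
    show HId π (M - 1 + 1) = 1
    rw [hm]
    exact hπsum
  apply le_antisymm
  · apply Finset.sup'_le
    intro k _
    show 1 - (b ᵥ* Lam M π) k / π ((k:ℕ) + 1) ≤ 1 - b (⟨M - 1, hlt⟩ : Fin M)
    rw [hS k]
    have h : (if (k:ℕ) ≤ ((⟨M - 1, hlt⟩ : Fin M) : ℕ) then
          b ⟨M - 1, hlt⟩ / HId π (((⟨M - 1, hlt⟩ : Fin M) : ℕ) + 1) else 0)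
        ≤ ∑ i : Fin M, (if (k:ℕ) ≤ (i:ℕ) then b i / HId π ((i:ℕ)+1) else 0) :=
      Finset.single_le_sum (fun i _ => hterm k i) (Finset.mem_univ _)
    rw [if_pos (show (k:ℕ) ≤ ((⟨M - 1, hlt⟩ : Fin M) : ℕ) by
        show (k:ℕ) ≤ M - 1; have := k.isLt; omega), hHlast, div_one] at h
    linarith
  · have hflast : (1 : ℝ) - (b ᵥ* Lam M π) (⟨M - 1, hlt⟩ : Fin M) /
        π (((⟨M - 1, hlt⟩ : Fin M) : ℕ) + 1) = 1 - b (⟨M - 1, hlt⟩ : Fin M) := by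
      rw [hS]
      congr 1
      rw [Finset.sum_eq_single_of_mem (⟨M - 1, hlt⟩ : Fin M) (Finset.mem_univ _)]
      · rw [if_pos (le_refl _), hHlast, div_one]
      · intro i _ hne
        rw [if_neg]
        intro hle
        apply hne
        apply Fin.ext
        show (i:ℕ) = M - 1
        have h3 : ((⟨M - 1, hlt⟩ : Fin M) : ℕ) = M - 1 := rfl
        rw [h3] at hle
        have := i.isLt
        omega
    have h2 : 1 - (b ᵥ* Lam M π) (⟨M - 1, hlt⟩ : Fin M) /
          π (((⟨M - 1, hlt⟩ : Fin M) : ℕ) + 1)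
        ≤ Finset.univ.sup' (Finset.univ_nonempty_iff.mpr ⟨⟨0, by omega⟩⟩)
          (fun e : Fin M => 1 - (b ᵥ* Lam M π) e / π ((e:ℕ)+1)) :=
      Finset.le_sup' (fun e : Fin M => 1 - (b ᵥ* Lam M π) e / π ((e:ℕ)+1))
        (Finset.mem_univ _)
    rw [hflast] at h2
    exact h2
end
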